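/- arXiv:1007.3393 — 7 statements merged into one kernel-verified Lean document; each statement's English description precedes it below -/
import Mathlib

section
/- Let h = a/b with a, b natural numbers, 1 ≤ a ≤ b. Then for every n ≥ 1 there exists a natural number c with c < b such that the n-th iterate of the mod-1 reduced lifted Bernoulli shift map applied to 1/2 satisfies M̃_h^n(1/2) = c/b. In particular the orbit of the critical point 1/2 under M̃_h takes only finitely many values. -/
open Filter MeasureTheory

/-- The lifted Bernoulli shift map `M_h`. -/
noncomputable def bernM (h x : ℝ) : ℝ :=
  if Int.fract x < 1/2 then (⌊x⌋ : ℝ) + 2 * Int.fract x + h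
  else (⌊x⌋ : ℝ) + 2 * Int.fract x - 1 - h

/-- The mod-1 reduced lifted Bernoulli shift map `M̃_h`. -/
noncomputable def bernMt (h x : ℝ) : ℝ := Int.fract (bernM h x)

/-!
For `h = k / b` with `k` an integer, `M_h` maps the lattice `b⁻¹ ℤ` into itself, since
`M_h x` is `2x - ⌊x⌋ + h` or `2x - ⌊x⌋ - 1 - h`. Hence `M̃_h` preserves the grid
`{c / b | c < b}`. The critical point `1/2` is not on the grid, but its image `{-h}` is.
-/

open Set

def unitGrid (b : ℕ) : Set ℝ := {x | ∃ c : ℕ, c < b ∧ x = c / b}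

theorem fract_intCast_div_mem_unitGrid (m : ℤ) {b : ℕ} (hb : 0 < b) :
    Int.fract ((m : ℝ) / b) ∈ unitGrid b := by
  have hb' : (0 : ℤ) < b := by exact_mod_cast hb
  have hmod := Int.emod_nonneg m hb'.ne'
  refine ⟨(m % b).toNat, by have := Int.emod_lt_of_pos m hb'; omega, ?_⟩
  rw [Int.fract_div_intCast_eq_div_intCast_mod]
  congr 1
  exact_mod_cast (Int.toNat_of_nonneg hmod).symm

theorem bernM_intCast_div {b : ℕ} (hb : b ≠ 0) (k m : ℤ) :
    ∃ m' : ℤ, bernM (k / b) (m / b) = m' / b := by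
  have hb' : (b : ℝ) ≠ 0 := by exact_mod_cast hb
  set q := ⌊(m : ℝ) / b⌋
  unfold bernM
  rw [Int.fract]
  split_ifs
  · exact ⟨2 * m - b * q + k, by push_cast; field_simp; ring⟩
  · exact ⟨2 * m - b * q - b - k, by push_cast; field_simp; ring⟩

theorem mapsTo_bernMt_unitGrid {b : ℕ} (k : ℤ) :
    MapsTo (bernMt (k / b)) (unitGrid b) (unitGrid b) := by
  rintro _ ⟨c, hc, rfl⟩
  obtain ⟨m', hm'⟩ := bernM_intCast_div (b := b) (by omega) k c
  rw [bernMt, ← Int.cast_natCast c, hm']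
  exact fract_intCast_div_mem_unitGrid m' (by omega)

theorem bernMt_one_half (h : ℝ) : bernMt h (1 / 2) = Int.fract (-h) := by
  have hfract : Int.fract ((1 : ℝ) / 2) = 1 / 2 := Int.fract_eq_self.2 ⟨by norm_num, by norm_num⟩
  have hfloor : ⌊(1 : ℝ) / 2⌋ = 0 := by norm_num [Int.floor_eq_zero_iff]
  rw [bernMt, bernM, hfract, hfloor, if_neg (lt_irrefl _)]
  congr 1
  ring

theorem stmt0 (a b : ℕ) (ha : 1 ≤ a) (hab : a ≤ b) (h : ℝ) (hh : h = (a : ℝ) / b)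
    (n : ℕ) (hn : 1 ≤ n) :
    ∃ c : ℕ, c < b ∧ (bernMt h)^[n] (1/2) = (c : ℝ) / b := by
  have hb : 0 < b := by omega
  obtain ⟨n, rfl⟩ := Nat.exists_eq_add_of_le' hn
  have hh' : h = ((a : ℤ) : ℝ) / b := by rw [hh, Int.cast_natCast]
  have hstart : bernMt (((a : ℤ) : ℝ) / b) (1 / 2) ∈ unitGrid b := by
    rw [bernMt_one_half, ← neg_div, ← Int.cast_neg]
    exact fract_intCast_div_mem_unitGrid _ hb
  rw [hh', Function.iterate_succ_apply]
  exact (mapsTo_bernMt_unitGrid (a : ℤ)).iterate n hstart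
end

section
/- The set of parameters h ∈ [0,1) for which the orbit of the critical point 1/2 under the mod-1 reduced lifted Bernoulli shift map M̃_h is eventually periodic (i.e. there exist natural numbers m < n with M̃_h^m(1/2) = M̃_h^n(1/2), so that the generating orbit yields a finite Markov partition) is dense in [0,1). -/
open Set

theorem Function.exists_lt_iterate_eq_of_mapsTo {α : Type*} {f : α → α} {s : Set α}
    (hs : s.Finite) (hf : MapsTo f s s) {x : α} (hx : x ∈ s) :
    ∃ m n : ℕ, m < n ∧ f^[m] x = f^[n] x :=
  hs.exists_lt_map_eq_of_forall_mem fun n ↦ hf.iterate n hx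

theorem Int.fract_mem_of_one_mem {G : AddSubgroup ℝ} (h1 : (1 : ℝ) ∈ G) {x : ℝ} (hx : x ∈ G) :
    Int.fract x ∈ G := by
  rw [Int.fract, ← zsmul_one]
  exact G.sub_mem hx (G.zsmul_mem h1 _)

theorem Rat.cast_mem_zmultiples_inv {q : ℚ} {N : ℕ} (hN : N ≠ 0) (hqN : q.den ∣ N) :
    (q : ℝ) ∈ AddSubgroup.zmultiples (N : ℝ)⁻¹ := by
  obtain ⟨k, rfl⟩ := hqN
  have hk : (k : ℝ) ≠ 0 := by exact_mod_cast right_ne_zero_of_mul hN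
  refine ⟨q.num * k, ?_⟩
  simp only [zsmul_eq_mul, Rat.cast_def]
  push_cast
  field_simp

theorem finite_zmultiples_inter_Ico (a : ℝ) :
    ((AddSubgroup.zmultiples a : Set ℝ) ∩ Ico 0 1).Finite := by
  rw [inter_comm]
  -- the instance is stated for the subgroup; the set coercion below does not find it unaided
  have : DiscreteTopology (AddSubgroup.zmultiples a) := inferInstance
  exact Metric.finite_isBounded_inter_isClosed DiscreteTopology.isDiscrete
    (Metric.isBounded_Ico 0 1) AddSubgroup.isClosed_of_discrete

theorem bernM_mem_of_one_mem {G : AddSubgroup ℝ} (h1 : (1 : ℝ) ∈ G) {h x : ℝ} (hh : h ∈ G) (hx : x ∈ G) : bernM h x ∈ G := by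
  have hfloor : (⌊x⌋ : ℝ) ∈ G := by
    rw [← zsmul_one]
    exact G.zsmul_mem h1 _
  have hfract := Int.fract_mem_of_one_mem h1 hx
  have htwo_fract : 2 * Int.fract x ∈ G := by
    rw [two_mul]
    exact G.add_mem hfract hfract
  unfold bernM
  split_ifs
  · exact G.add_mem (G.add_mem hfloor htwo_fract) hh
  · exact G.sub_mem (G.sub_mem (G.add_mem hfloor htwo_fract) h1) hh

theorem bernMt_mem_of_one_mem {G : AddSubgroup ℝ} (h1 : (1 : ℝ) ∈ G) {h x : ℝ} (hh : h ∈ G)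
    (hx : x ∈ G) : bernMt h x ∈ G :=
  Int.fract_mem_of_one_mem h1 (bernM_mem_of_one_mem h1 hh hx)

theorem bernMt_exists_lt_iterate_eq_of_rat (h x : ℚ) :
    ∃ m n : ℕ, m < n ∧ (bernMt h)^[m] x = (bernMt h)^[n] x := by
  set G := AddSubgroup.zmultiples ((h.den * x.den : ℕ) : ℝ)⁻¹
  have hN : h.den * x.den ≠ 0 := by positivity
  have h1 : (1 : ℝ) ∈ G := by exact_mod_cast Rat.cast_mem_zmultiples_inv (q := 1) hN (by simp)
  have hh : (h : ℝ) ∈ G := Rat.cast_mem_zmultiples_inv hN (dvd_mul_right _ _)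
  have hx : (x : ℝ) ∈ G := Rat.cast_mem_zmultiples_inv hN (dvd_mul_left _ _)
  have hmem : ∀ y ∈ G, bernMt h y ∈ (G : Set ℝ) ∩ Ico 0 1 :=
    fun y hy ↦ ⟨bernMt_mem_of_one_mem h1 hh hy, Int.fract_nonneg _, Int.fract_lt_one _⟩
  obtain ⟨m, n, hmn, heq⟩ := Function.exists_lt_iterate_eq_of_mapsTo
    (finite_zmultiples_inter_Ico _) (fun y hy ↦ hmem y hy.1) (hmem x hx)
  refine ⟨m + 1, n + 1, by omega, ?_⟩
  simpa only [Function.iterate_succ_apply] using heq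

theorem stmt2 :
    ∀ h₀ ∈ Set.Ico (0:ℝ) 1, h₀ ∈ closure {h : ℝ | h ∈ Set.Ico (0:ℝ) 1 ∧
      ∃ m n : ℕ, m < n ∧ (bernMt h)^[m] (1/2) = (bernMt h)^[n] (1/2)} := by
  rintro h₀ ⟨h₀_nonneg, h₀_lt_one⟩
  refine Metric.mem_closure_iff.2 fun ε hε ↦ ?_
  obtain ⟨q, h₀_lt_q, hq⟩ := exists_rat_btwn (lt_min (lt_add_of_pos_right h₀ hε) h₀_lt_one)
  have hq' : (q : ℝ) < h₀ + ε ∧ (q : ℝ) < 1 := lt_min_iff.1 hq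
  refine ⟨q, ⟨⟨by linarith, hq'.2⟩, ?_⟩, ?_⟩
  · simpa using bernMt_exists_lt_iterate_eq_of_rat q (1 / 2)
  · rw [Real.dist_eq, abs_sub_lt_iff]
    constructor <;> linarith
end

section
/- For the parameter value h = 1, for every x ∈ [0,1] and every natural number n, the Takagi approximant of the lifted Bernoulli shift map satisfies the exact identity T_1^n(x) = ∫_0^x (⌊M_1^{n+1}(y)⌋ − ⌊y⌋) dy = Σ_{k=0}^{n} 2^{−k} · dist(2^k x, ℤ), where dist(y, ℤ) denotes the distance from y to the nearest integer. Consequently T_1^n(x) converges as n → ∞ to the classical Takagi function Σ_{k=0}^{∞} 2^{−k} dist(2^k x, ℤ). -/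
/-!
Since `M_1 y ∈ 2y + ℤ` and `⌊M_1 y⌋ = ⌊y⌋ ± 1` according as `{y} < 1/2` or not, the
integrand `⌊M_1^{n+1} y⌋ - ⌊y⌋` telescopes into `∑_{k ≤ n} r(2^k y)`, where `r` is the `±1`
square wave. The square wave is the right derivative of the distance to `ℤ`, so integrating
`r(2^k y)` from `0` to `x` gives `2^{-k} dist(2^k x, ℤ)`. The limit statement is then the
convergence of the partial sums of a series dominated by `∑ 2^{-k-1}`.
-/

open Filter

/-- The Takagi approximant `T_h^n(x) = ∫_0^x (⌊M_h^{n+1}(y)⌋ - ⌊y⌋) dy`. -/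
noncomputable def bernTak (h : ℝ) (n : ℕ) (x : ℝ) : ℝ :=
  ∫ y in (0:ℝ)..x, ((⌊(bernM h)^[n+1] y⌋ : ℝ) - (⌊y⌋ : ℝ))

/-- Distance from a real number to the nearest integer. -/
noncomputable def distInt (y : ℝ) : ℝ := |y - (round y : ℝ)|

open Set intervalIntegral

noncomputable def squareWave (y : ℝ) : ℝ := if Int.fract y < 1/2 then 1 else -1

lemma measurable_squareWave : Measurable squareWave :=
  Measurable.ite (measurableSet_lt measurable_fract measurable_const)
    measurable_const measurable_const

lemma abs_squareWave_le_one (y : ℝ) : |squareWave y| ≤ 1 := by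
  unfold squareWave; split_ifs <;> simp

lemma squareWave_add_intCast (y : ℝ) (m : ℤ) : squareWave (y + m) = squareWave y := by
  simp only [squareWave, Int.fract_add_intCast]

lemma intervalIntegrable_squareWave_const_mul (c a b : ℝ) :
    IntervalIntegrable (fun y => squareWave (c * y)) MeasureTheory.volume a b :=
  intervalIntegrable_const.mono_fun' (g := fun _ => (1:ℝ))
    (measurable_squareWave.comp (measurable_const_mul c)).aestronglyMeasurable
    (Eventually.of_forall fun y => abs_squareWave_le_one (c * y))

lemma exists_bernM_one_eq_two_mul_add_intCast (y : ℝ) : ∃ m : ℤ, bernM 1 y = 2 * y + m := by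
  unfold bernM
  split_ifs
  · exact ⟨1 - ⌊y⌋, by rw [Int.fract]; push_cast; ring⟩
  · exact ⟨-⌊y⌋ - 2, by rw [Int.fract]; push_cast; ring⟩

lemma exists_iterate_bernM_one_eq (n : ℕ) (y : ℝ) :
    ∃ m : ℤ, (bernM 1)^[n] y = 2 ^ n * y + m := by
  induction n with
  | zero => exact ⟨0, by simp⟩
  | succ n ih =>
    obtain ⟨m, hm⟩ := ih
    obtain ⟨m', hm'⟩ := exists_bernM_one_eq_two_mul_add_intCast ((bernM 1)^[n] y)
    refine ⟨2 * m + m', ?_⟩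
    rw [Function.iterate_succ_apply', hm', hm]
    push_cast
    ring

lemma squareWave_iterate_bernM_one (n : ℕ) (y : ℝ) :
    squareWave ((bernM 1)^[n] y) = squareWave (2 ^ n * y) := by
  obtain ⟨m, hm⟩ := exists_iterate_bernM_one_eq n y
  rw [hm, squareWave_add_intCast]

lemma floor_bernM_one (y : ℝ) : (⌊bernM 1 y⌋ : ℝ) = ⌊y⌋ + squareWave y := by
  have h0 := Int.fract_nonneg y
  have h1 := Int.fract_lt_one y
  unfold bernM squareWave
  split_ifs
  · rw [show ⌊(⌊y⌋ : ℝ) + 2 * Int.fract y + 1⌋ = ⌊y⌋ + 1 by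
      rw [Int.floor_eq_iff]; push_cast; constructor <;> linarith]
    push_cast; ring
  · rw [show ⌊(⌊y⌋ : ℝ) + 2 * Int.fract y - 1 - 1⌋ = ⌊y⌋ - 1 by
      rw [Int.floor_eq_iff]; push_cast; constructor <;> linarith]
    push_cast; ring

lemma floor_iterate_bernM_one_sub_floor (n : ℕ) (y : ℝ) :
    (⌊(bernM 1)^[n+1] y⌋ : ℝ) - ⌊y⌋ =
      ∑ k ∈ Finset.range (n+1), squareWave (2 ^ k * y) := by
  induction n with
  | zero => simp [floor_bernM_one]
  | succ n ih =>
    rw [Function.iterate_succ_apply', floor_bernM_one, squareWave_iterate_bernM_one,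
      Finset.sum_range_succ, ← ih]
    ring

lemma distInt_le_abs_sub_intCast (y : ℝ) (m : ℤ) : distInt y ≤ |y - m| := round_le y m

lemma distInt_le_half (y : ℝ) : distInt y ≤ 1 / 2 := abs_sub_round y

lemma distInt_eq_abs_sub_of_mem_Ico {y : ℝ} {m : ℤ}
    (hy : y ∈ Ico ((m : ℝ) - 1 / 2) (m + 1 / 2)) :
    distInt y = |y - m| := by
  rw [distInt, round_eq_iff.2 hy]

lemma lipschitzWith_one_distInt : LipschitzWith 1 distInt :=
  LipschitzWith.of_le_add fun a b =>
    calc distInt a ≤ |a - round b| := distInt_le_abs_sub_intCast a (round b)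
      _ ≤ |b - round b| + |a - b| := by
        rw [add_comm]; simpa using abs_sub_le a b (round b : ℝ)
      _ = distInt b + dist a b := rfl

lemma hasDerivWithinAt_distInt_Ioi (y : ℝ) :
    HasDerivWithinAt distInt (squareWave y) (Ioi y) y := by
  have h0 := Int.fract_nonneg y
  have h1 := Int.fract_lt_one y
  have hfract : Int.fract y = y - ⌊y⌋ := rfl
  refine HasDerivWithinAt.mono ?_ Ioi_subset_Ici_self
  unfold squareWave
  split_ifs with h
  · -- On `[y, ⌊y⌋ + 1/2)` the nearest integer is `⌊y⌋`.
    refine ((hasDerivAt_id y).sub_const (⌊y⌋ : ℝ)).hasDerivWithinAt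
      |>.congr_of_eventuallyEq_of_mem ?_ self_mem_Ici
    filter_upwards [Ico_mem_nhdsGE (show y < ⌊y⌋ + 1 / 2 by linarith)] with z ⟨hyz, hz⟩
    rw [distInt_eq_abs_sub_of_mem_Ico ⟨by linarith, hz⟩, abs_of_nonneg (by linarith), id]
  · -- On `[y, ⌊y⌋ + 1)` the nearest integer is `⌊y⌋ + 1`.
    refine ((hasDerivAt_id y).const_sub ((⌊y⌋ + 1 : ℤ) : ℝ)).hasDerivWithinAt
      |>.congr_of_eventuallyEq_of_mem ?_ self_mem_Ici
    filter_upwards [Ico_mem_nhdsGE (show y < ⌊y⌋ + 1 by linarith)] with z ⟨hyz, hz⟩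
    rw [distInt_eq_abs_sub_of_mem_Ico (m := ⌊y⌋ + 1)
      ⟨by push_cast; linarith, by push_cast; linarith⟩,
      abs_of_nonpos (by push_cast; linarith), id]
    ring

lemma integral_squareWave (t : ℝ) : ∫ y in (0:ℝ)..t, squareWave y = distInt t := by
  rw [integral_eq_sub_of_hasDeriv_right lipschitzWith_one_distInt.continuous.continuousOn
    (fun y _ => hasDerivWithinAt_distInt_Ioi y)
    (by simpa using intervalIntegrable_squareWave_const_mul 1 0 t)]
  simp [distInt]

lemma integral_squareWave_two_pow_mul (k : ℕ) (x : ℝ) :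
    ∫ y in (0:ℝ)..x, squareWave (2 ^ k * y) = (1 / 2) ^ k * distInt (2 ^ k * x) := by
  rw [integral_comp_mul_left squareWave (by positivity), mul_zero, integral_squareWave,
    smul_eq_mul, one_div, inv_pow]

lemma bernTak_one_eq_sum (n : ℕ) (x : ℝ) :
    bernTak 1 n x = ∑ k ∈ Finset.range (n+1), (1/2:ℝ)^k * distInt ((2:ℝ)^k * x) := by
  simp only [bernTak, floor_iterate_bernM_one_sub_floor]
  rw [integral_finsetSum fun k _ => intervalIntegrable_squareWave_const_mul _ 0 x]
  exact Finset.sum_congr rfl fun k _ => integral_squareWave_two_pow_mul k x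

lemma summable_takagi (x : ℝ) : Summable fun k : ℕ => (1/2:ℝ)^k * distInt ((2:ℝ)^k * x) :=
  (summable_geometric_two.mul_right (1 / 2)).of_nonneg_of_le
    (fun k => mul_nonneg (by positivity) (abs_nonneg _))
    (fun k => by
      rw [one_div_pow]
      exact mul_le_mul_of_nonneg_left (distInt_le_half _) (by positivity))

theorem stmt7_general (x : ℝ) :
    (∀ n : ℕ, bernTak 1 n x =
      ∑ k ∈ Finset.range (n+1), (1/2:ℝ)^k * distInt ((2:ℝ)^k * x)) ∧
    Tendsto (fun n : ℕ => bernTak 1 n x) atTop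
      (nhds (∑' k : ℕ, (1/2:ℝ)^k * distInt ((2:ℝ)^k * x))) := by
  refine ⟨fun n => bernTak_one_eq_sum n x, ?_⟩
  simpa only [bernTak_one_eq_sum, Function.comp_def] using
    (summable_takagi x).hasSum.tendsto_sum_nat.comp (tendsto_add_atTop_nat 1)

theorem stmt7 (x : ℝ) (hx : x ∈ Set.Icc (0:ℝ) 1) :
    (∀ n : ℕ, bernTak 1 n x =
      ∑ k ∈ Finset.range (n+1), (1/2:ℝ)^k * distInt ((2:ℝ)^k * x)) ∧
    Tendsto (fun n : ℕ => bernTak 1 n x) atTop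
      (nhds (∑' k : ℕ, (1/2:ℝ)^k * distInt ((2:ℝ)^k * x))) :=
  stmt7_general x
end

section
/- For every parameter h ∈ (0,1) and every natural number n, the Takagi approximant of the lifted Bernoulli shift map evaluated at h satisfies the exact recursion identity T_h^n(h) = Σ_{k=0}^{n} 2^{−(k+1)} t_h(M̃_h^k(h)) + 2^{−(n+1)} t_h(M̃_h^n(h)). -/
/-- The piecewise linear function `t_h` for `h ∈ (0,1)`. -/
noncomputable def tFun (h x : ℝ) : ℝ :=
  if x < (1-h)/2 then 0
  else if x < 1/2 then x - (1-h)/2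
  else if x < (1+h)/2 then (1+h)/2 - x
  else 0

namespace BernAux

open MeasureTheory intervalIntegral Finset

noncomputable def Jf (h : ℝ) (n : ℕ) (y : ℝ) : ℝ := (⌊(bernM h)^[n+1] y⌋ : ℝ) - (⌊y⌋ : ℝ)

lemma bernTak_eq (h : ℝ) (n : ℕ) (x : ℝ) : bernTak h n x = ∫ y in (0:ℝ)..x, Jf h n y := rfl

lemma bernM_add_int (h x : ℝ) (k : ℤ) : bernM h (x + k) = bernM h x + k := by
  unfold bernM
  rw [Int.fract_add_intCast, Int.floor_add_intCast]
  split <;> push_cast <;> ring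

lemma bernM_iterate_add_int (h : ℝ) (n : ℕ) (x : ℝ) (k : ℤ) :
    (bernM h)^[n] (x + k) = (bernM h)^[n] x + k := by
  induction n generalizing x with
  | zero => simp
  | succ n ih =>
    rw [Function.iterate_succ_apply, Function.iterate_succ_apply, bernM_add_int, ih]

lemma Jf_periodic (h : ℝ) (n : ℕ) : Function.Periodic (Jf h n) 1 := by
  intro y
  unfold Jf
  have h1 : y + (1:ℝ) = y + ((1:ℤ):ℝ) := by norm_num
  rw [h1, bernM_iterate_add_int, Int.floor_add_intCast, Int.floor_add_intCast]
  push_cast; ring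

lemma measurable_bernM (h : ℝ) : Measurable (bernM h) := by
  have hfl : Measurable fun x : ℝ => (⌊x⌋ : ℝ) := by
    have : (fun x : ℝ => (⌊x⌋ : ℝ)) = fun x => x - Int.fract x := by
      funext x; rw [Int.self_sub_fract]
    rw [this]; exact measurable_id.sub measurable_fract
  unfold bernM
  refine Measurable.ite ?_ ?_ ?_
  · exact measurableSet_lt measurable_fract measurable_const
  · exact (hfl.add ((measurable_const.mul measurable_fract))).add measurable_const
  · exact (((hfl.add ((measurable_const.mul measurable_fract)))).sub measurable_const).sub
      measurable_const

lemma measurable_Jf (h : ℝ) (n : ℕ) : Measurable (Jf h n) := by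
  have hfl : Measurable fun x : ℝ => (⌊x⌋ : ℝ) := by
    have : (fun x : ℝ => (⌊x⌋ : ℝ)) = fun x => x - Int.fract x := by
      funext x; rw [Int.self_sub_fract]
    rw [this]; exact measurable_id.sub measurable_fract
  exact (hfl.comp ((measurable_bernM h).iterate (n+1))).sub hfl

lemma abs_bernM_sub (h : ℝ) (hh : h ∈ Set.Ioo (0:ℝ) 1) (x : ℝ) : |bernM h x - x| ≤ 2 := by
  obtain ⟨h0, h1⟩ := hh
  have hf0 := Int.fract_nonneg x
  have hf1 := Int.fract_lt_one x
  have hx : x = (⌊x⌋ : ℝ) + Int.fract x := by rw [Int.floor_add_fract]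
  unfold bernM
  split <;> rw [abs_le] <;> constructor <;> nlinarith [Int.fract_nonneg x, Int.fract_lt_one x]

lemma abs_iterate_sub (h : ℝ) (hh : h ∈ Set.Ioo (0:ℝ) 1) (n : ℕ) (x : ℝ) :
    |(bernM h)^[n] x - x| ≤ 2 * n := by
  induction n generalizing x with
  | zero => simp
  | succ n ih =>
    rw [Function.iterate_succ_apply]
    have h1 := ih (bernM h x)
    have h2 := abs_bernM_sub h hh x
    calc |(bernM h)^[n] (bernM h x) - x|
        = |((bernM h)^[n] (bernM h x) - bernM h x) + (bernM h x - x)| := by ring_nf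
      _ ≤ |(bernM h)^[n] (bernM h x) - bernM h x| + |bernM h x - x| := abs_add_le _ _
      _ ≤ 2 * n + 2 := add_le_add h1 h2
      _ = 2 * (n+1 : ℕ) := by push_cast; ring

lemma abs_floor_sub (a b : ℝ) : |(⌊a⌋ : ℝ) - (⌊b⌋ : ℝ)| ≤ |a - b| + 1 := by
  have h1 := Int.floor_le a
  have h2 := Int.sub_one_lt_floor a
  have h3 := Int.floor_le b
  have h4 := Int.sub_one_lt_floor b
  rw [abs_le]
  constructor <;> [skip; skip] <;> cases abs_cases (a - b) <;> linarith [abs_nonneg (a-b),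
    le_abs_self (a-b), neg_abs_le (a-b)]

lemma abs_Jf_le (h : ℝ) (hh : h ∈ Set.Ioo (0:ℝ) 1) (n : ℕ) (y : ℝ) :
    |Jf h n y| ≤ 2 * (n+1) + 1 := by
  unfold Jf
  calc |(⌊(bernM h)^[n+1] y⌋ : ℝ) - (⌊y⌋ : ℝ)| ≤ |(bernM h)^[n+1] y - y| + 1 :=
        abs_floor_sub _ _
    _ ≤ 2 * (n+1) + 1 := by
        have := abs_iterate_sub h hh (n+1) y; push_cast at this ⊢; linarith

lemma intInt_of_bdd {f : ℝ → ℝ} (hf : Measurable f) {C : ℝ} (hC : ∀ y, |f y| ≤ C) (a b : ℝ) :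
    IntervalIntegrable f volume a b := by
  rw [intervalIntegrable_iff]
  exact Measure.integrableOn_of_bounded measure_Ioc_lt_top.ne hf.aestronglyMeasurable
    (Filter.Eventually.of_forall fun y => by simpa [Real.norm_eq_abs] using hC y)

lemma intInt_Jf (h : ℝ) (hh : h ∈ Set.Ioo (0:ℝ) 1) (n : ℕ) (a b : ℝ) :
    IntervalIntegrable (Jf h n) volume a b :=
  intInt_of_bdd (measurable_Jf h n) (abs_Jf_le h hh n) a b

lemma intInt_JfM (h : ℝ) (hh : h ∈ Set.Ioo (0:ℝ) 1) (n : ℕ) (a b : ℝ) :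
    IntervalIntegrable (fun y => Jf h n (bernM h y)) volume a b :=
  intInt_of_bdd ((measurable_Jf h n).comp (measurable_bernM h))
    (fun y => abs_Jf_le h hh n (bernM h y)) a b


section
variable {h : ℝ} (hh : h ∈ Set.Ioo (0:ℝ) 1)
include hh

lemma bernM_eq_left {y : ℝ} (h0 : 0 ≤ y) (h1 : y < 1/2) : bernM h y = 2*y + h := by
  have hf : Int.fract y = y := Int.fract_eq_self.2 ⟨h0, by linarith⟩
  have hfl : ⌊y⌋ = 0 := by rw [Int.floor_eq_zero_iff]; exact ⟨h0, by linarith⟩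
  unfold bernM
  rw [hf, hfl, if_pos h1]
  push_cast; ring

lemma bernM_eq_right {y : ℝ} (h0 : 1/2 ≤ y) (h1 : y < 1) : bernM h y = 2*y - 1 - h := by
  have hf : Int.fract y = y := Int.fract_eq_self.2 ⟨by linarith, h1⟩
  have hfl : ⌊y⌋ = 0 := by rw [Int.floor_eq_zero_iff]; exact ⟨by linarith, h1⟩
  unfold bernM
  rw [hf, hfl, if_neg (by push_neg; exact h0)]
  push_cast; ring

omit hh in
lemma integral_congr_Ioo {f g : ℝ → ℝ} {a b : ℝ} (hab : a ≤ b)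
    (hfg : ∀ y, a < y → y < b → f y = g y) :
    ∫ y in a..b, f y = ∫ y in a..b, g y := by
  apply intervalIntegral.integral_congr_ae
  have hnull : (volume : MeasureTheory.Measure ℝ) {b} = 0 := MeasureTheory.measure_singleton b
  rw [MeasureTheory.ae_iff]
  apply MeasureTheory.measure_mono_null _ hnull
  intro x hx
  simp only [Set.mem_setOf_eq, Classical.not_imp] at hx
  obtain ⟨hmem, hne⟩ := hx
  rw [Set.uIoc_of_le hab] at hmem
  simp only [Set.mem_singleton_iff]
  by_contra hxb
  exact hne (hfg x hmem.1 (lt_of_le_of_ne hmem.2 hxb))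

omit hh in
lemma integral_eq_const {f : ℝ → ℝ} {a b c : ℝ} (hab : a ≤ b)
    (hf : ∀ y, a < y → y < b → f y = c) : ∫ y in a..b, f y = c * (b - a) := by
  rw [integral_congr_Ioo hab hf, intervalIntegral.integral_const, smul_eq_mul, mul_comm]

-- values of Jf 0 on pieces of [0,1)
lemma Jf0_eq₁ {y : ℝ} (h0 : 0 ≤ y) (h1 : y < (1-h)/2) : Jf h 0 y = 0 := by
  have ha := hh.1
  have hb := hh.2
  have hM : bernM h y = 2*y + h := bernM_eq_left hh h0 (by linarith)
  have hfl : ⌊y⌋ = 0 := by rw [Int.floor_eq_zero_iff]; exact ⟨h0, by linarith⟩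
  have hfl2 : ⌊(2*y + h : ℝ)⌋ = 0 := by rw [Int.floor_eq_zero_iff]; constructor <;> [linarith; linarith]
  unfold Jf
  rw [Function.iterate_one, hM, hfl, hfl2]
  norm_num

lemma Jf0_eq₂ {y : ℝ} (h0 : (1-h)/2 ≤ y) (h1 : y < 1/2) : Jf h 0 y = 1 := by
  have ha := hh.1
  have hb := hh.2
  have hM : bernM h y = 2*y + h := bernM_eq_left hh (by linarith) h1
  have hfl : ⌊y⌋ = 0 := by rw [Int.floor_eq_zero_iff]; exact ⟨by linarith, by linarith⟩
  have hfl2 : ⌊(2*y + h : ℝ)⌋ = 1 := by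
    rw [Int.floor_eq_iff]; push_cast; constructor <;> linarith
  unfold Jf
  rw [Function.iterate_one, hM, hfl, hfl2]
  norm_num

lemma Jf0_eq₃ {y : ℝ} (h0 : 1/2 ≤ y) (h1 : y < (1+h)/2) : Jf h 0 y = -1 := by
  have ha := hh.1
  have hb := hh.2
  have hM : bernM h y = 2*y - 1 - h := bernM_eq_right hh h0 (by linarith)
  have hfl : ⌊y⌋ = 0 := by rw [Int.floor_eq_zero_iff]; exact ⟨by linarith, by linarith⟩
  have hfl2 : ⌊(2*y - 1 - h : ℝ)⌋ = -1 := by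
    rw [Int.floor_eq_iff]; push_cast; constructor <;> linarith
  unfold Jf
  rw [Function.iterate_one, hM, hfl, hfl2]
  norm_num

lemma Jf0_eq₄ {y : ℝ} (h0 : (1+h)/2 ≤ y) (h1 : y < 1) : Jf h 0 y = 0 := by
  have ha := hh.1
  have hb := hh.2
  have hM : bernM h y = 2*y - 1 - h := bernM_eq_right hh (by linarith) h1
  have hfl : ⌊y⌋ = 0 := by rw [Int.floor_eq_zero_iff]; exact ⟨by linarith, by linarith⟩
  have hfl2 : ⌊(2*y - 1 - h : ℝ)⌋ = 0 := by
    rw [Int.floor_eq_zero_iff]; constructor <;> [linarith; linarith]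
  unfold Jf
  rw [Function.iterate_one, hM, hfl, hfl2]
  norm_num

lemma Tak0 {x : ℝ} (h0 : 0 ≤ x) (h1 : x ≤ 1) : bernTak h 0 x = tFun h x := by
  have ha := hh.1
  have hb := hh.2
  have hq1 : (0:ℝ) ≤ (1-h)/2 := by linarith
  have hq12 : ((1-h)/2 : ℝ) ≤ 1/2 := by linarith
  have hq23 : (1/2 : ℝ) ≤ (1+h)/2 := by linarith
  rw [bernTak_eq]
  rcases le_or_gt x ((1-h)/2) with hc1 | hc1
  · rw [integral_eq_const h0 (fun y hy1 hy2 => Jf0_eq₁ hh (le_of_lt hy1) (lt_of_lt_of_le hy2 hc1))]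
    unfold tFun
    split_ifs <;> linarith
  rcases le_or_gt x (1/2) with hc2 | hc2
  · rw [← intervalIntegral.integral_add_adjacent_intervals (b := (1-h)/2)
      (intInt_Jf h hh 0 _ _) (intInt_Jf h hh 0 _ _),
      integral_eq_const hq1 (fun y hy1 hy2 => Jf0_eq₁ hh (le_of_lt hy1) hy2),
      integral_eq_const (le_of_lt hc1)
        (fun y hy1 hy2 => Jf0_eq₂ hh (le_of_lt hy1) (lt_of_lt_of_le hy2 hc2))]
    unfold tFun
    split_ifs <;> linarith
  rcases le_or_gt x ((1+h)/2) with hc3 | hc3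
  · rw [← intervalIntegral.integral_add_adjacent_intervals (b := (1/2:ℝ))
      (intInt_Jf h hh 0 _ _) (intInt_Jf h hh 0 _ _),
      ← intervalIntegral.integral_add_adjacent_intervals (a := (0:ℝ)) (b := (1-h)/2)
      (intInt_Jf h hh 0 _ _) (intInt_Jf h hh 0 _ _),
      integral_eq_const hq1 (fun y hy1 hy2 => Jf0_eq₁ hh (le_of_lt hy1) hy2),
      integral_eq_const hq12 (fun y hy1 hy2 => Jf0_eq₂ hh (le_of_lt hy1) hy2),
      integral_eq_const (le_of_lt hc2)
        (fun y hy1 hy2 => Jf0_eq₃ hh (le_of_lt hy1) (lt_of_lt_of_le hy2 hc3))]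
    unfold tFun
    split_ifs <;> linarith
  · rw [← intervalIntegral.integral_add_adjacent_intervals (b := ((1+h)/2:ℝ))
      (intInt_Jf h hh 0 _ _) (intInt_Jf h hh 0 _ _),
      ← intervalIntegral.integral_add_adjacent_intervals (a := (0:ℝ)) (b := (1/2:ℝ))
      (intInt_Jf h hh 0 _ _) (intInt_Jf h hh 0 _ _),
      ← intervalIntegral.integral_add_adjacent_intervals (a := (0:ℝ)) (b := (1-h)/2)
      (intInt_Jf h hh 0 _ _) (intInt_Jf h hh 0 _ _),
      integral_eq_const hq1 (fun y hy1 hy2 => Jf0_eq₁ hh (le_of_lt hy1) hy2),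
      integral_eq_const hq12 (fun y hy1 hy2 => Jf0_eq₂ hh (le_of_lt hy1) hy2),
      integral_eq_const hq23 (fun y hy1 hy2 => Jf0_eq₃ hh (le_of_lt hy1) hy2),
      integral_eq_const (le_of_lt hc3)
        (fun y hy1 hy2 => Jf0_eq₄ hh (le_of_lt hy1) (lt_of_lt_of_le hy2 h1))]
    unfold tFun
    split_ifs <;> linarith

-- splitting ∫_0^u into ∫_0^v + ∫_v^u for Jf
omit hh in
lemma G_sub (hh' : h ∈ Set.Ioo (0:ℝ) 1) (n : ℕ) (u v : ℝ) :
    ∫ y in v..u, Jf h n y = bernTak h n u - bernTak h n v := by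
  rw [bernTak_eq, bernTak_eq, ← intervalIntegral.integral_interval_sub_left
    (intInt_Jf h hh' n 0 u) (intInt_Jf h hh' n 0 v)]

lemma G_add_one (n : ℕ) (u : ℝ) :
    bernTak h n (u + 1) = bernTak h n u + bernTak h n 1 := by
  have h1 : ∫ y in u..(u+1), Jf h n y = ∫ y in (0:ℝ)..(0+1), Jf h n y :=
    (Jf_periodic h n).intervalIntegral_add_eq u 0
  have h2 := G_sub hh n (u+1) u
  rw [h1] at h2
  norm_num at h2
  rw [← bernTak_eq] at h2
  linarith

-- the substitution identity on the left half
lemma subst_left (n : ℕ) {x : ℝ} (h0 : 0 ≤ x) (h1 : x ≤ 1/2) :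
    ∫ y in (0:ℝ)..x, Jf h n (bernM h y)
      = (1/2) * (bernTak h n (2*x+h) - bernTak h n h) := by
  have hcong : ∫ y in (0:ℝ)..x, Jf h n (bernM h y)
      = ∫ y in (0:ℝ)..x, Jf h n (2*y + h) := by
    apply integral_congr_Ioo h0
    intro y hy1 hy2
    rw [bernM_eq_left hh (le_of_lt hy1) (lt_of_lt_of_le hy2 h1)]
  rw [hcong, intervalIntegral.integral_comp_mul_add (fun z => Jf h n z) two_ne_zero h,
    show (2:ℝ)*0+h = h by ring, G_sub hh n (2*x+h) h, smul_eq_mul]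
  ring

lemma subst_right (n : ℕ) {x : ℝ} (h0 : 1/2 ≤ x) (h1 : x ≤ 1) :
    ∫ y in (0:ℝ)..x, Jf h n (bernM h y)
      = (1/2) * (bernTak h n (1+h) - bernTak h n h)
        + (1/2) * (bernTak h n (2*x-1-h) - bernTak h n (1-h) + bernTak h n 1) := by
  rw [← intervalIntegral.integral_add_adjacent_intervals (b := (1/2:ℝ))
    (intInt_JfM h hh n _ _) (intInt_JfM h hh n _ _)]
  have e1 : ∫ y in (0:ℝ)..(1/2:ℝ), Jf h n (bernM h y)
      = (1/2) * (bernTak h n (1+h) - bernTak h n h) := by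
    have := subst_left hh n (by norm_num : (0:ℝ) ≤ 1/2) (le_refl _)
    rw [this]; norm_num
  have e2 : ∫ y in (1/2:ℝ)..x, Jf h n (bernM h y)
      = (1/2) * (bernTak h n (2*x-1-h) - bernTak h n (-h)) := by
    have hcong : ∫ y in (1/2:ℝ)..x, Jf h n (bernM h y)
        = ∫ y in (1/2:ℝ)..x, Jf h n (2*y + (-1-h)) := by
      apply integral_congr_Ioo h0
      intro y hy1 hy2
      rw [show 2*y + (-1-h) = 2*y - 1 - h by ring,
        bernM_eq_right hh (le_of_lt hy1) (lt_of_lt_of_le hy2 h1)]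
    rw [hcong, intervalIntegral.integral_comp_mul_add (fun z => Jf h n z) two_ne_zero (-1-h)]
    have hl : 2 * (1/2:ℝ) + (-1-h) = -h := by ring
    have hr : 2 * x + (-1-h) = 2*x-1-h := by ring
    rw [hl, hr, G_sub hh n (2*x-1-h) (-h), smul_eq_mul]
    ring
  have e3 : bernTak h n (-h) = bernTak h n (1-h) - bernTak h n 1 := by
    have := G_add_one hh n (-h)
    rw [show -h + 1 = 1 - h by ring] at this
    linarith
  rw [e1, e2, e3]; ring

omit hh in
lemma Jf_succ (n : ℕ) (y : ℝ) : Jf h (n+1) y = Jf h 0 y + Jf h n (bernM h y) := by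
  unfold Jf
  rw [show n+1+1 = (n+1)+1 by ring, Function.iterate_succ_apply, Function.iterate_one]
  ring

lemma G_succ_raw (n : ℕ) {x : ℝ} (h0 : 0 ≤ x) (h1 : x ≤ 1) :
    bernTak h (n+1) x = bernTak h 0 x + ∫ y in (0:ℝ)..x, Jf h n (bernM h y) := by
  rw [bernTak_eq, bernTak_eq]
  rw [show (∫ y in (0:ℝ)..x, Jf h (n+1) y)
      = ∫ y in (0:ℝ)..x, (Jf h 0 y + Jf h n (bernM h y)) from
    intervalIntegral.integral_congr (fun y _ => Jf_succ n y)]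
  exact intervalIntegral.integral_add (intInt_Jf h hh 0 _ _) (intInt_JfM h hh n _ _)

lemma G_one_zero (n : ℕ) : bernTak h n 1 = 0 := by
  induction n with
  | zero =>
    rw [Tak0 hh (by norm_num) (le_refl _)]
    have hb := hh.2
    unfold tFun
    split_ifs <;> [linarith; linarith; linarith; rfl]
  | succ n ih =>
    have hs := G_succ_raw hh n (by norm_num : (0:ℝ) ≤ 1) (le_refl _)
    rw [subst_right hh n (by norm_num) (le_refl _)] at hs
    have e1 : bernTak h n (1+h) = bernTak h n h + bernTak h n 1 := by
      have := G_add_one hh n h; rw [show h + 1 = 1 + h by ring] at this; exact this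
    have e0 : bernTak h 0 1 = 0 := by
      rw [Tak0 hh (by norm_num) (le_refl _)]
      have hb := hh.2
      unfold tFun
      split_ifs <;> [linarith; linarith; linarith; rfl]
    rw [e0, e1, ih, show (2:ℝ)*1-1-h = 1-h by ring] at hs
    rw [hs]; ring

lemma G_periodic (n : ℕ) : Function.Periodic (bernTak h n) 1 := fun u => by
  rw [G_add_one hh, G_one_zero hh, add_zero]

lemma G_fract (n : ℕ) (u : ℝ) : bernTak h n (Int.fract u) = bernTak h n u := by
  have hp := ((G_periodic hh n).int_mul ⌊u⌋) (Int.fract u)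
  rw [mul_one, Int.fract_add_floor] at hp
  exact hp.symm

lemma stageL (n : ℕ) {x : ℝ} (h0 : 0 ≤ x) (h1 : x ≤ 1/2) :
    bernTak h (n+1) x
      = tFun h x + (1/2) * (bernTak h n (Int.fract (2*x+h)) - bernTak h n h) := by
  rw [G_succ_raw hh n h0 (by linarith), subst_left hh n h0 h1,
    Tak0 hh h0 (by linarith), G_fract hh n (2*x+h)]

lemma stageR (n : ℕ) {x : ℝ} (h0 : 1/2 ≤ x) (h1 : x ≤ 1) :
    bernTak h (n+1) x
      = tFun h x + (1/2) * (bernTak h n (Int.fract (2*x-1-h)) - bernTak h n (1-h)) := by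
  rw [G_succ_raw hh n (by linarith) h1, subst_right hh n h0 h1,
    Tak0 hh (by linarith) h1, G_fract hh n (2*x-1-h)]
  have e1 : bernTak h n (1+h) = bernTak h n h + bernTak h n 1 := by
    have := G_add_one hh n h; rw [show h + 1 = 1 + h by ring] at this; exact this
  rw [e1, G_one_zero hh]
  ring

lemma tSymm {x : ℝ} (h0 : 0 ≤ x) (h1 : x ≤ 1) : tFun h (1-x) = tFun h x := by
  have ha := hh.1
  have hb := hh.2
  unfold tFun
  split_ifs <;> linarith

lemma Gsymm (n : ℕ) : ∀ x : ℝ, 0 ≤ x → x ≤ 1 → bernTak h n (1-x) = bernTak h n x := by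
  induction n with
  | zero =>
    intro x h0 h1
    rw [Tak0 hh (by linarith) (by linarith), Tak0 hh h0 h1, tSymm hh h0 h1]
  | succ n ih =>
    have aux : ∀ x : ℝ, 0 ≤ x → x ≤ 1/2 → bernTak h (n+1) (1-x) = bernTak h (n+1) x := by
      intro x h0 h1
      rw [stageL hh n h0 h1, stageR hh n (by linarith) (by linarith)]
      have e2 : (2:ℝ)*(1-x)-1-h = -(2*x+h) + 1 := by ring
      have efr : Int.fract (2*(1-x)-1-h) = Int.fract (-(2*x+h)) := by
        rw [e2, show (-(2*x+h) + 1 : ℝ) = -(2*x+h) + ((1:ℤ):ℝ) by norm_num,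
          Int.fract_add_intCast]
      have eIH : bernTak h n (Int.fract (2*(1-x)-1-h)) = bernTak h n (Int.fract (2*x+h)) := by
        rw [efr]
        rcases eq_or_ne (Int.fract (2*x+h)) 0 with hz | hz
        · rw [Int.fract_neg_eq_zero.2 hz, hz]
        · rw [Int.fract_neg hz]
          exact ih _ (Int.fract_nonneg _) (le_of_lt (Int.fract_lt_one _))
      rw [eIH, tSymm hh (by linarith) (by linarith),
        ih h (le_of_lt hh.1) (le_of_lt hh.2)]
    intro x h0 h1
    rcases le_or_gt x (1/2) with hc | hc
    · exact aux x h0 hc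
    · have := aux (1-x) (by linarith) (by linarith)
      rw [show 1-(1-x) = x by ring] at this
      exact this.symm

omit hh in
lemma bernMt_eq_fract (x : ℝ) : bernMt h x = Int.fract (bernM h x) := rfl

lemma Grec (n : ℕ) {x : ℝ} (h0 : 0 ≤ x) (h1 : x ≤ 1) :
    bernTak h (n+1) x = tFun h x + (1/2) * (bernTak h n (bernMt h x) - bernTak h n h) := by
  rcases lt_or_ge x (1/2) with hc | hc
  · rw [stageL hh n h0 (le_of_lt hc), bernMt_eq_fract, bernM_eq_left hh h0 hc]
  rcases lt_or_ge x 1 with hc1 | hc1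
  · rw [stageR hh n hc h1, bernMt_eq_fract, bernM_eq_right hh hc hc1,
      Gsymm hh n h (le_of_lt hh.1) (le_of_lt hh.2)]
  · have hx1 : x = 1 := le_antisymm h1 hc1
    subst hx1
    have hM1 : bernM h 1 = 1 + h := by
      have hf : Int.fract (1:ℝ) = 0 := by norm_num
      unfold bernM
      rw [hf, if_pos (by norm_num)]
      norm_num
    have hmt : bernMt h 1 = h := by
      rw [bernMt_eq_fract, hM1, show (1:ℝ)+h = h + ((1:ℤ):ℝ) by push_cast; ring, Int.fract_add_intCast,
        Int.fract_eq_self.2 ⟨le_of_lt hh.1, hh.2⟩]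
    have ht1 : tFun h 1 = 0 := by
      have hb := hh.2
      unfold tFun
      split_ifs <;> [linarith; linarith; linarith; rfl]
    rw [G_one_zero hh, hmt, ht1]
    ring

lemma unroll (n : ℕ) : ∀ x : ℝ, 0 ≤ x → x ≤ 1 →
    bernTak h n x = (∑ k ∈ Finset.range (n+1), (1/2:ℝ)^k * tFun h ((bernMt h)^[k] x))
      - ∑ j ∈ Finset.range n, (1/2:ℝ)^(j+1) * bernTak h (n-1-j) h := by
  induction n with
  | zero =>
    intro x h0 h1
    simpa using Tak0 hh h0 h1
  | succ n ih =>
    intro x h0 h1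
    rw [Grec hh n h0 h1, ih (bernMt h x) (Int.fract_nonneg _) (le_of_lt (Int.fract_lt_one _))]
    have hC : (∑ k ∈ Finset.range (n+1+1), (1/2:ℝ)^k * tFun h ((bernMt h)^[k] x))
        = tFun h x
          + ∑ k ∈ Finset.range (n+1), (1/2:ℝ)^(k+1) * tFun h ((bernMt h)^[k] (bernMt h x)) := by
      rw [Finset.sum_range_succ']
      simp only [pow_zero, one_mul, Function.iterate_zero_apply]
      rw [add_comm]
      rfl
    have hD : (∑ j ∈ Finset.range (n+1), (1/2:ℝ)^(j+1) * bernTak h (n+1-1-j) h)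
        = (1/2) * bernTak h n h
          + ∑ j ∈ Finset.range n, (1/2:ℝ)^(j+1+1) * bernTak h (n-1-j) h := by
      rw [Finset.sum_range_succ']
      rw [add_comm]
      congr 1
      · norm_num
      · apply Finset.sum_congr rfl
        intro j _
        congr 2
        omega
    rw [hC, hD]
    have hhalfA : (1/2:ℝ) * (∑ k ∈ Finset.range (n+1),
          (1/2:ℝ)^k * tFun h ((bernMt h)^[k] (bernMt h x)))
        = ∑ k ∈ Finset.range (n+1), (1/2:ℝ)^(k+1) * tFun h ((bernMt h)^[k] (bernMt h x)) := by
      rw [Finset.mul_sum]; apply Finset.sum_congr rfl; intro k _; ring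
    have hhalfB : (1/2:ℝ) * (∑ j ∈ Finset.range n, (1/2:ℝ)^(j+1) * bernTak h (n-1-j) h)
        = ∑ j ∈ Finset.range n, (1/2:ℝ)^(j+1+1) * bernTak h (n-1-j) h := by
      rw [Finset.mul_sum]; apply Finset.sum_congr rfl; intro j _; ring
    rw [← hhalfA, ← hhalfB]
    ring

end

noncomputable def Ff (c : ℕ → ℝ) (n : ℕ) : ℝ :=
  (∑ k ∈ Finset.range (n+1), (1/2:ℝ)^(k+1) * c k) + (1/2:ℝ)^(n+1) * c n

lemma half_sum (c : ℕ → ℝ) (m : ℕ) :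
    (∑ k ∈ Finset.range m, (1/2:ℝ)^(k+1) * c k)
      = (1/2) * ∑ k ∈ Finset.range m, (1/2:ℝ)^k * c k := by
  rw [Finset.mul_sum]; apply Finset.sum_congr rfl; intro k _; ring

lemma algId (c : ℕ → ℝ) : ∀ n : ℕ,
    (∑ k ∈ Finset.range (n+1), (1/2:ℝ)^k * c k)
      - (∑ j ∈ Finset.range n, (1/2:ℝ)^(j+1) * Ff c (n-1-j)) = Ff c n := by
  intro n
  induction n with
  | zero =>
    simp [Ff]
    ring
  | succ n ih =>
    have peel : (∑ j ∈ Finset.range (n+1), (1/2:ℝ)^(j+1) * Ff c (n+1-1-j))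
        = (1/2) * Ff c n + ∑ j ∈ Finset.range n, (1/2:ℝ)^(j+1+1) * Ff c (n-1-j) := by
      rw [Finset.sum_range_succ']
      rw [add_comm]
      congr 1
      · norm_num
      · apply Finset.sum_congr rfl
        intro j _
        congr 2
        omega
    have hhalf : (∑ j ∈ Finset.range n, (1/2:ℝ)^(j+1+1) * Ff c (n-1-j))
        = (1/2) * ∑ j ∈ Finset.range n, (1/2:ℝ)^(j+1) * Ff c (n-1-j) := by
      rw [Finset.mul_sum]; apply Finset.sum_congr rfl; intro j _; ring
    have hS : (∑ k ∈ Finset.range (n+1+1), (1/2:ℝ)^k * c k)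
        = (∑ k ∈ Finset.range (n+1), (1/2:ℝ)^k * c k) + (1/2:ℝ)^(n+1) * c (n+1) :=
      Finset.sum_range_succ _ _
    have hF : Ff c (n+1)
        = (1/2) * ((∑ k ∈ Finset.range (n+1), (1/2:ℝ)^k * c k) + (1/2:ℝ)^(n+1) * c (n+1))
          + (1/2:ℝ)^(n+1+1) * c (n+1) := by
      unfold Ff
      rw [half_sum c (n+1+1), Finset.sum_range_succ]
    rw [peel, hhalf, hS, hF, show ((1/2:ℝ))^(n+1+1) = (1/2)*(1/2)^(n+1) by ring]
    linarith [ih]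

end BernAux

theorem stmt10 (h : ℝ) (hh : h ∈ Set.Ioo (0:ℝ) 1) (n : ℕ) :
    bernTak h n h =
      (∑ k ∈ Finset.range (n+1), (1/2:ℝ)^(k+1) * tFun h ((bernMt h)^[k] h)) +
      (1/2:ℝ)^(n+1) * tFun h ((bernMt h)^[n] h) := by
  have h0 := le_of_lt hh.1
  have h1 := le_of_lt hh.2
  set c : ℕ → ℝ := fun k => tFun h ((bernMt h)^[k] h) with hc
  suffices hmain : ∀ m : ℕ, bernTak h m h = BernAux.Ff c m by
    have := hmain n
    rw [BernAux.Ff] at this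
    exact this
  intro m
  induction m using Nat.strong_induction_on with
  | _ m ih =>
    rw [BernAux.unroll hh m h h0 h1]
    have hrw : (∑ j ∈ Finset.range m, (1/2:ℝ)^(j+1) * bernTak h (m-1-j) h)
        = ∑ j ∈ Finset.range m, (1/2:ℝ)^(j+1) * BernAux.Ff c (m-1-j) := by
      apply Finset.sum_congr rfl
      intro j hj
      rw [ih (m-1-j) (by simp at hj; omega)]
    rw [hrw]
    exact BernAux.algId c m
end

section
/- For every parameter h ∈ [1/2, 1) and every natural number n, the Takagi approximant of the lifted Bernoulli shift map at the point h is exactly constant in n: T_h^n(h) = ∫_0^h (⌊M_h^{n+1}(y)⌋ − ⌊y⌋) dy = (1−h)/2. -/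
open MeasureTheory intervalIntegral Set Function

/-- half-integers -/
def halfSet : Set ℝ := Set.range (fun m : ℤ => (m : ℝ) / 2)

lemma halfSet_countable : halfSet.Countable := Set.countable_range _

lemma bernM_add_int (h x : ℝ) (k : ℤ) : bernM h (x + k) = bernM h x + k := by
  unfold bernM
  rw [Int.fract_add_intCast, Int.floor_add_intCast]
  split <;> push_cast <;> ring

lemma bernM_iter_add_int (h : ℝ) (n : ℕ) (x : ℝ) (k : ℤ) :
    (bernM h)^[n] (x + k) = (bernM h)^[n] x + k := by
  induction n generalizing x with
  | zero => simp
  | succ n ih =>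
    rw [Function.iterate_succ_apply, Function.iterate_succ_apply, bernM_add_int, ih]

lemma measurable_bernM (h : ℝ) : Measurable (bernM h) := by
  have : bernM h = fun x =>
      if Int.fract x < 1/2 then (x - Int.fract x) + 2 * Int.fract x + h
      else (x - Int.fract x) + 2 * Int.fract x - 1 - h := by
    funext x; unfold bernM; rw [Int.self_sub_fract]
  rw [this]
  exact Measurable.ite (measurableSet_lt measurable_fract measurable_const)
    (((measurable_id.sub measurable_fract).add (measurable_fract.const_mul 2)).add measurable_const)
    ((((measurable_id.sub measurable_fract).add (measurable_fract.const_mul 2)).sub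
      measurable_const).sub measurable_const)

lemma measurable_bernM_iter (h : ℝ) (n : ℕ) : Measurable ((bernM h)^[n]) :=
  (measurable_bernM h).iterate n

lemma abs_bernM_le (h x : ℝ) (h0 : 0 ≤ h) (h1 : h < 1) : |bernM h x| ≤ |x| + 3 := by
  have hf0 := Int.fract_nonneg x
  have hf1 := Int.fract_lt_one x
  have hfl : (⌊x⌋ : ℝ) = x - Int.fract x := (Int.self_sub_fract x).symm
  unfold bernM
  split <;>
    (rw [hfl, abs_le]; constructor <;> [linarith [neg_abs_le x]; linarith [le_abs_self x]])

lemma abs_bernM_iter_le (h : ℝ) (h0 : 0 ≤ h) (h1 : h < 1) (n : ℕ) (x : ℝ) :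
    |(bernM h)^[n] x| ≤ |x| + 3 * n := by
  induction n with
  | zero => simp
  | succ n ih =>
    rw [Function.iterate_succ_apply']
    have h3 := abs_bernM_le h ((bernM h)^[n] x) h0 h1
    push_cast
    linarith

lemma bernM_preimage_countable (h : ℝ) {S : Set ℝ} (hS : S.Countable) :
    (bernM h ⁻¹' S).Countable := by
  have hsub : bernM h ⁻¹' S ⊆
      ⋃ k : ℤ, ((fun c => (c - h + k) / 2) '' S ∪ (fun c => (c + 1 + h + k) / 2) '' S) := by
    intro x hx
    refine Set.mem_iUnion.mpr ⟨⌊x⌋, ?_⟩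
    have hfl : (⌊x⌋ : ℝ) = x - Int.fract x := (Int.self_sub_fract x).symm
    by_cases hc : Int.fract x < 1/2
    · refine Or.inl ⟨bernM h x, hx, ?_⟩
      unfold bernM; rw [if_pos hc, hfl]; ring
    · refine Or.inr ⟨bernM h x, hx, ?_⟩
      unfold bernM; rw [if_neg hc, hfl]; ring
  exact Set.Countable.mono hsub
    (Set.countable_iUnion fun k => (hS.image _).union (hS.image _))

lemma bernM_iter_preimage_countable (h : ℝ) (n : ℕ) {S : Set ℝ} (hS : S.Countable) :
    ((bernM h)^[n] ⁻¹' S).Countable := by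
  induction n with
  | zero => simpa using hS
  | succ n ih =>
    rw [Function.iterate_succ, Set.preimage_comp]
    exact bernM_preimage_countable h ih

/-- The bad set: points whose orbit hits a half-integer. -/
def badSet (h : ℝ) : Set ℝ := ⋃ k : ℕ, (bernM h)^[k] ⁻¹' halfSet

lemma badSet_countable (h : ℝ) : (badSet h).Countable :=
  Set.countable_iUnion fun k => bernM_iter_preimage_countable h k halfSet_countable

lemma not_halfSet_fract {x : ℝ} (hx : x ∉ halfSet) :
    Int.fract x ≠ 0 ∧ Int.fract x ≠ 1/2 := by
  constructor
  · intro hc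
    refine hx ⟨2 * ⌊x⌋, ?_⟩
    have := Int.self_sub_fract x
    push_cast
    rw [hc] at this; linarith
  · intro hc
    refine hx ⟨2 * ⌊x⌋ + 1, ?_⟩
    have := Int.self_sub_fract x
    push_cast
    rw [hc] at this; linarith

lemma floor_one_sub {z : ℝ} (hz : Int.fract z ≠ 0) : ((⌊(1:ℝ) - z⌋ : ℤ) : ℝ) = -(⌊z⌋ : ℝ) := by
  have key : Int.fract (1 - z) = 1 - Int.fract z := by
    have h1 : (1:ℝ) - z = -z + ((1:ℤ) : ℝ) := by push_cast; ring
    rw [h1, Int.fract_add_intCast, Int.fract_neg hz]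
  have h1 := Int.self_sub_fract (1 - z)
  have h2 := Int.self_sub_fract z
  rw [key] at h1; linarith

lemma fract_one_sub {z : ℝ} (hz : Int.fract z ≠ 0) : Int.fract (1 - z) = 1 - Int.fract z := by
  have h1 : (1:ℝ) - z = -z + ((1:ℤ) : ℝ) := by push_cast; ring
  rw [h1, Int.fract_add_intCast, Int.fract_neg hz]

lemma bernM_symm (h x : ℝ) (hx : x ∉ halfSet) : bernM h (1 - x) = 1 - bernM h x := by
  obtain ⟨hf0, hf2⟩ := not_halfSet_fract hx
  have key := fract_one_sub hf0
  have kfl := floor_one_sub hf0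
  have hlt := Int.fract_lt_one x
  unfold bernM
  rcases lt_or_ge (Int.fract x) (1/2) with hc | hc
  · rw [if_pos hc, if_neg (by rw [key]; intro hcon; linarith), key, kfl]; ring
  · have hc' : 1/2 < Int.fract x := lt_of_le_of_ne hc (Ne.symm hf2)
    rw [if_neg (not_lt.mpr hc), if_pos (by rw [key]; linarith), key, kfl]; ring

lemma bernM_iter_symm (h : ℝ) (n : ℕ) (x : ℝ) (hx : x ∉ badSet h) :
    (bernM h)^[n] (1 - x) = 1 - (bernM h)^[n] x := by
  induction n with
  | zero => simp
  | succ n ih =>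
    rw [Function.iterate_succ_apply', Function.iterate_succ_apply', ih,
      bernM_symm h _ (fun hmem => hx (Set.mem_iUnion.mpr ⟨n, hmem⟩))]

lemma floor_iter_symm (h : ℝ) (n : ℕ) :
    ∀ᵐ y : ℝ, ((⌊(bernM h)^[n] (1 - y)⌋ : ℤ) : ℝ) = -((⌊(bernM h)^[n] y⌋ : ℤ) : ℝ) := by
  have hz : volume (badSet h) = 0 := (badSet_countable h).measure_zero _
  filter_upwards [measure_eq_zero_iff_ae_notMem.mp hz] with y hy
  rw [bernM_iter_symm h n y hy]
  exact floor_one_sub (not_halfSet_fract fun hmem => hy (Set.mem_iUnion.mpr ⟨n, hmem⟩)).1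

lemma intInt_floor_iter (h : ℝ) (h0 : 0 ≤ h) (h1 : h < 1) (n : ℕ) (a b : ℝ) :
    IntervalIntegrable (fun y => ((⌊(bernM h)^[n] y⌋ : ℤ) : ℝ)) volume a b := by
  have hmeas : Measurable (fun y => ((⌊(bernM h)^[n] y⌋ : ℤ) : ℝ)) := by
    have : (fun y => ((⌊(bernM h)^[n] y⌋ : ℤ) : ℝ)) =
        fun y => (bernM h)^[n] y - Int.fract ((bernM h)^[n] y) := by
      funext y; rw [Int.self_sub_fract]
    rw [this]
    exact (measurable_bernM_iter h n).sub (measurable_fract.comp (measurable_bernM_iter h n))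
  refine IntervalIntegrable.mono_fun' (g := fun _ => |a| + |b| + 3 * n + 1)
    intervalIntegrable_const hmeas.aestronglyMeasurable.restrict ?_
  filter_upwards [ae_restrict_mem measurableSet_uIoc] with x hx
  have hxb : |x| ≤ |a| + |b| := by
    rcases hx with ⟨hx1, hx2⟩
    rw [abs_le]; constructor
    · calc -(|a| + |b|) ≤ min a b := by
            rcases min_cases a b with ⟨e, _⟩ | ⟨e, _⟩ <;> rw [e] <;>
              [linarith [neg_abs_le a, abs_nonneg b]; linarith [neg_abs_le b, abs_nonneg a]]
        _ ≤ x := hx1.le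
    · calc x ≤ max a b := hx2
        _ ≤ |a| + |b| := by
            rcases max_cases a b with ⟨e, _⟩ | ⟨e, _⟩ <;> rw [e] <;>
              [linarith [le_abs_self a, abs_nonneg b]; linarith [le_abs_self b, abs_nonneg a]]
  have hit := abs_bernM_iter_le h h0 h1 n x
  have hfl1 : ((⌊(bernM h)^[n] x⌋ : ℤ) : ℝ) ≤ (bernM h)^[n] x := Int.floor_le _
  have hfl2 : (bernM h)^[n] x - 1 < ((⌊(bernM h)^[n] x⌋ : ℤ) : ℝ) := Int.sub_one_lt_floor _
  rw [Real.norm_eq_abs, abs_le]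
  constructor <;> [skip; skip] <;>
    [linarith [neg_abs_le ((bernM h)^[n] x)]; linarith [le_abs_self ((bernM h)^[n] x)]]

/-- symmetric interval integral vanishes -/
lemma integral_floor_iter_symm_zero (h : ℝ) (h0 : 0 ≤ h) (h1 : h < 1) (n : ℕ) {a b : ℝ}
    (hab : a + b = 1) :
    (∫ y in a..b, ((⌊(bernM h)^[n] y⌋ : ℤ) : ℝ)) = 0 := by
  set f : ℝ → ℝ := fun y => ((⌊(bernM h)^[n] y⌋ : ℤ) : ℝ) with hf
  have e1 : (∫ y in a..b, f (1 - y)) = ∫ y in a..b, f y := by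
    rw [intervalIntegral.integral_comp_sub_left f 1]
    congr 1 <;> linarith
  have e2 : (∫ y in a..b, f (1 - y)) = ∫ y in a..b, -f y := by
    apply intervalIntegral.integral_congr_ae
    filter_upwards [floor_iter_symm h n] with y hy _
    exact hy
  rw [e2, intervalIntegral.integral_neg] at e1
  linarith

theorem stmt11 (h : ℝ) (hh : h ∈ Set.Ico (1/2 : ℝ) 1) (n : ℕ) :
    bernTak h n h = (1 - h) / 2 := by
  obtain ⟨hh1, hh2⟩ := hh
  have h0 : (0:ℝ) ≤ h := le_trans (by norm_num) hh1
  set f : ℝ → ℝ := fun y => ((⌊(bernM h)^[n] y⌋ : ℤ) : ℝ) with hfdef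
  have hint : ∀ a b : ℝ, IntervalIntegrable f volume a b :=
    fun a b => intInt_floor_iter h h0 hh2 n a b
  have hcomp : ∀ y : ℝ, ((⌊(bernM h)^[n+1] y⌋ : ℤ) : ℝ) = f (bernM h y) := by
    intro y; rw [Function.iterate_succ_apply]
  -- integrability of composed function
  have hintc : ∀ a b : ℝ, IntervalIntegrable (fun y => f (bernM h y)) volume a b := by
    intro a b
    have : (fun y => f (bernM h y)) = fun y => ((⌊(bernM h)^[n+1] y⌋ : ℤ) : ℝ) := by
      funext y; rw [hcomp]
    rw [this]
    exact intInt_floor_iter h h0 hh2 (n+1) a b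
  -- Step A : rewrite the Takagi integrand
  have stepA : bernTak h n h = ∫ y in (0:ℝ)..h, f (bernM h y) := by
    unfold bernTak
    apply intervalIntegral.integral_congr_ae
    filter_upwards with y hy
    rw [Set.uIoc_of_le h0] at hy
    have hy0 : 0 < y := hy.1
    have hy1 : y < 1 := lt_of_le_of_lt hy.2 hh2
    rw [hcomp, Int.floor_eq_zero_iff.mpr ⟨hy0.le, hy1⟩]
    simp
  -- Step B : split
  have stepB : (∫ y in (0:ℝ)..h, f (bernM h y)) =
      (∫ y in (0:ℝ)..(1/2:ℝ), f (bernM h y)) + ∫ y in (1/2:ℝ)..h, f (bernM h y) :=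
    (intervalIntegral.integral_add_adjacent_intervals (hintc 0 (1/2)) (hintc (1/2) h)).symm
  -- piece 1
  have p1 : (∫ y in (0:ℝ)..(1/2:ℝ), f (bernM h y)) = 2⁻¹ * ∫ u in h..(1+h), f u := by
    have c1 : (∫ y in (0:ℝ)..(1/2:ℝ), f (bernM h y)) =
        ∫ y in (0:ℝ)..(1/2:ℝ), f (2 * y + h) := by
      apply intervalIntegral.integral_congr_ae
      have hne : ∀ᵐ y : ℝ, y ≠ (1/2 : ℝ) := by
        rw [ae_iff]
        have : {y : ℝ | ¬ y ≠ (1/2:ℝ)} = {(1/2:ℝ)} := by ext y; simp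
        rw [this]; exact measure_singleton _
      filter_upwards [hne] with y hyne hy
      rw [Set.uIoc_of_le (by norm_num : (0:ℝ) ≤ 1/2)] at hy
      have hy0 : 0 < y := hy.1
      have hy2 : y < 1/2 := lt_of_le_of_ne hy.2 hyne
      have hfr : Int.fract y = y := Int.fract_eq_self.mpr ⟨hy0.le, by linarith⟩
      have hflr : (⌊y⌋ : ℝ) = 0 := by
        rw [Int.floor_eq_zero_iff.mpr ⟨hy0.le, by linarith⟩]; simp
      unfold bernM
      rw [hfr, if_pos hy2, hflr]; ring_nf
    rw [c1, intervalIntegral.integral_comp_mul_add f two_ne_zero h]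
    norm_num [smul_eq_mul]
  -- piece 2
  have p2 : (∫ y in (1/2:ℝ)..h, f (bernM h y)) = 2⁻¹ * ∫ u in (-h)..(h-1), f u := by
    have c2 : (∫ y in (1/2:ℝ)..h, f (bernM h y)) =
        ∫ y in (1/2:ℝ)..h, f (2 * y - (1 + h)) := by
      apply intervalIntegral.integral_congr_ae
      filter_upwards with y hy
      rw [Set.uIoc_of_le hh1] at hy
      have hy0 : 1/2 < y := hy.1
      have hy1 : y < 1 := lt_of_le_of_lt hy.2 hh2
      have hfr : Int.fract y = y := Int.fract_eq_self.mpr ⟨by linarith, hy1⟩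
      have hflr : (⌊y⌋ : ℝ) = 0 := by
        rw [Int.floor_eq_zero_iff.mpr ⟨by linarith, hy1⟩]; simp
      unfold bernM
      rw [hfr, if_neg (by linarith), hflr]; ring_nf
    rw [c2, intervalIntegral.integral_comp_mul_sub f two_ne_zero (1+h)]
    norm_num [smul_eq_mul]
    rw [show 2*h - (1+h) = h - 1 by ring]
  -- translation identities
  have ftrans : ∀ (y : ℝ) (k : ℤ), f (y + k) = f y + k := by
    intro y k
    rw [hfdef]
    simp only
    rw [bernM_iter_add_int, Int.floor_add_intCast]
    push_cast; ring
  -- ∫_h^{1+h} f = ∫_0^1 f + h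
  have t1 : (∫ u in h..(1+h), f u) = (∫ u in (0:ℝ)..1, f u) + h := by
    have s1 : (∫ u in h..(1+h), f u) = (∫ u in h..1, f u) + ∫ u in (1:ℝ)..(1+h), f u :=
      (intervalIntegral.integral_add_adjacent_intervals (hint h 1) (hint 1 (1+h))).symm
    have s2 : (∫ u in (1:ℝ)..(1+h), f u) = ∫ u in (0:ℝ)..h, f (u + 1) := by
      rw [intervalIntegral.integral_comp_add_right f 1]
      norm_num [add_comm]
    have s3 : (∫ u in (0:ℝ)..h, f (u + 1)) = (∫ u in (0:ℝ)..h, f u) + h := by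
      have : (fun u => f (u + 1)) = fun u => f u + 1 := by
        funext u
        have := ftrans u 1
        push_cast at this
        simpa using this
      rw [this, intervalIntegral.integral_add (hint 0 h) intervalIntegrable_const]
      simp
    have s4 : (∫ u in (0:ℝ)..h, f u) + (∫ u in h..1, f u) = ∫ u in (0:ℝ)..1, f u :=
      intervalIntegral.integral_add_adjacent_intervals (hint 0 h) (hint h 1)
    rw [s1, s2, s3]; linarith
  -- ∫_{-h}^{h-1} f = ∫_{1-h}^{h} f - (2h - 1)
  have t2 : (∫ u in (-h)..(h-1), f u) = (∫ u in (1-h)..h, f u) - (2*h - 1) := by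
    have s2 : (∫ u in (-h)..(h-1), f u) = ∫ u in (1-h)..h, f (u - 1) := by
      rw [intervalIntegral.integral_comp_sub_right f 1]
      congr 1 <;> ring
    have s3 : (∫ u in (1-h)..h, f (u - 1)) = (∫ u in (1-h)..h, f u) - (2*h - 1) := by
      have : (fun u => f (u - 1)) = fun u => f u + (-1 : ℝ) := by
        funext u
        have := ftrans u (-1)
        push_cast at this
        rw [show u + (-1:ℝ) = u - 1 by ring] at this
        simpa using this
      rw [this, intervalIntegral.integral_add (hint (1-h) h) intervalIntegrable_const]
      rw [intervalIntegral.integral_const]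
      simp only [smul_eq_mul]
      ring
    rw [s2, s3]
  -- symmetry vanishing
  have G0 : (∫ u in (0:ℝ)..1, f u) = 0 :=
    integral_floor_iter_symm_zero h h0 hh2 n (by norm_num)
  have H0 : (∫ u in (1-h)..h, f u) = 0 :=
    integral_floor_iter_symm_zero h h0 hh2 n (by ring)
  rw [stepA, stepB, p1, p2, t1, t2, G0, H0]
  ring
end

section
/- For every parameter h ∈ [1/2, 1], the diffusion coefficient of the lifted Bernoulli shift map exists and lies on the linear plateau: lim_{n→∞} (1/(2n)) ∫_0^1 (M_h^n(x) − x)² dx = 1/2. -/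
/-!
Write `d = M_h - id` and `g_n = M_h^n - id`, so that `g_{n+1} = g_n ∘ M_h + d`, and let `P` be the
transfer operator of `M_h` on the circle: `∫₀¹ w · (G ∘ M_h) = ∫₀¹ (P w) · G` for 1-periodic `G`.
Expanding the square gives `J_{n+1} = J_n + 2 A_n + ∫ d²` for `J_n = ∫ g_n²` and
`A_n = ∫ (P d) · g_n`. For `h ∈ [1/2, 1]` the function `P d` is an eigenfunction of `P` with
eigenvalue `1/2`, so `A_{n+1} = A_n / 2 + ∫ (P d) · d`. Solving the two recurrences gives
`J_n = n (∫ d² + 4 ∫ (P d) · d) + O(1)`, and a piecewise-polynomial computation shows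
`∫ d² + 4 ∫ (P d) · d = 1`.
-/

open Filter

open MeasureTheory Set intervalIntegral Function

namespace LiftedBernoulli

lemma intervalIntegrable_of_norm_le {f : ℝ → ℝ} {C : ℝ} (hf : Measurable f)
    (hC : ∀ x, ‖f x‖ ≤ C) (a b : ℝ) : IntervalIntegrable f volume a b :=
  intervalIntegrable_const.mono_fun' hf.aestronglyMeasurable (ae_of_all _ hC)

lemma intervalIntegrable_mul_of_norm_le {f g : ℝ → ℝ} {Cf Cg : ℝ} (hf : Measurable f)
    (hfC : ∀ x, ‖f x‖ ≤ Cf) (hg : Measurable g) (hgC : ∀ x, ‖g x‖ ≤ Cg) (a b : ℝ) :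
    IntervalIntegrable (fun x => f x * g x) volume a b :=
  intervalIntegrable_of_norm_le (hf.mul hg) (fun x => norm_mul_le_of_le (hfC x) (hgC x)) a b

lemma intervalIntegrable_sq_of_norm_le {f : ℝ → ℝ} {C : ℝ} (hf : Measurable f)
    (hfC : ∀ x, ‖f x‖ ≤ C) (a b : ℝ) : IntervalIntegrable (fun x => f x ^ 2) volume a b := by
  simpa only [sq] using intervalIntegrable_mul_of_norm_le hf hfC hf hfC a b

lemma integral_eq_of_eqOn_quadratic {f : ℝ → ℝ} {a b : ℝ} (A B C : ℝ) (hab : a ≤ b)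
    (hf : EqOn f (fun x => A * x ^ 2 + B * x + C) (Ioo a b)) :
    ∫ x in a..b, f x = A * (b ^ 3 - a ^ 3) / 3 + B * (b ^ 2 - a ^ 2) / 2 + C * (b - a) := by
  rw [integral_congr_Ioo_of_le hab hf,
    integral_eq_sub_of_hasDerivAt (f := fun x => A * x ^ 3 / 3 + B * x ^ 2 / 2 + C * x)
      (fun x _ => ?_) (by apply Continuous.intervalIntegrable; fun_prop)]
  · ring
  · exact (((((hasDerivAt_pow 3 x).const_mul A).div_const 3).add
      (((hasDerivAt_pow 2 x).const_mul B).div_const 2)).add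
        ((hasDerivAt_id' x).const_mul C)).congr_deriv (by push_cast; ring)

lemma fract_sub_of_mem {x a : ℝ} (hx : x ∈ Ico 0 1) (ha : a ∈ Icc 0 1) :
    Int.fract (x - a) = if a ≤ x then x - a else x - a + 1 := by
  obtain ⟨hx₀, hx₁⟩ := hx
  obtain ⟨ha₀, ha₁⟩ := ha
  split_ifs
  · exact Int.fract_eq_iff.2 ⟨by linarith, by linarith, 0, by simp⟩
  · exact Int.fract_eq_iff.2 ⟨by linarith, by linarith, -1, by push_cast; ring⟩

lemma fract_add_of_mem {x a : ℝ} (hx : x ∈ Ico 0 1) (ha : a ∈ Icc 0 1) :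
    Int.fract (x + a) = if x + a < 1 then x + a else x + a - 1 := by
  obtain ⟨hx₀, hx₁⟩ := hx
  obtain ⟨ha₀, ha₁⟩ := ha
  split_ifs
  · exact Int.fract_eq_iff.2 ⟨by linarith, by linarith, 0, by simp⟩
  · exact Int.fract_eq_iff.2 ⟨by linarith, by linarith, 1, by push_cast; ring⟩

lemma tendsto_of_recurrence {J A : ℕ → ℝ} {σ c : ℝ} (hJ₀ : J 0 = 0) (hA₀ : A 0 = 0)
    (hJ : ∀ n, J (n + 1) = J n + 2 * A n + σ) (hA : ∀ n, A (n + 1) = A n / 2 + c) :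
    Tendsto (fun n : ℕ => 1 / (2 * (n : ℝ)) * J n) atTop (nhds ((σ + 4 * c) / 2)) := by
  have hA' : ∀ n, A n = 2 * c * (1 - (1 / 2) ^ n) := by
    intro n
    induction n with
    | zero => simp [hA₀]
    | succ n ih => rw [hA, ih]; ring
  have hJ' : ∀ n : ℕ, J n = n * (σ + 4 * c) - 8 * c * (1 - (1 / 2) ^ n) := by
    intro n
    induction n with
    | zero => simp [hJ₀]
    | succ n ih => rw [hJ, ih, hA']; push_cast; ring
  have hlim : Tendsto (fun n : ℕ => (σ + 4 * c) / 2 - 4 * c * ((1 - (1 / 2 : ℝ) ^ n) * (1 / n)))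
      atTop (nhds ((σ + 4 * c) / 2 - 4 * c * ((1 - 0) * 0))) :=
    tendsto_const_nhds.sub (((tendsto_const_nhds.sub (tendsto_pow_atTop_nhds_zero_of_lt_one
      (by norm_num) (by norm_num))).mul tendsto_one_div_atTop_nhds_zero_nat).const_mul _)
  rw [sub_zero, mul_zero, mul_zero, sub_zero] at hlim
  refine hlim.congr' ((eventually_ne_atTop 0).mono fun n hn => ?_)
  have hn' : (n : ℝ) ≠ 0 := Nat.cast_ne_zero.2 hn
  simp only [hJ']
  field_simp
  ring

variable (h : ℝ)

lemma bernM_add_one (x : ℝ) : bernM h (x + 1) = bernM h x + 1 := by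
  simp only [bernM, Int.fract_add_one, Int.floor_add_one]
  split_ifs <;> push_cast <;> ring

lemma bernM_of_lt_half {x : ℝ} (hx₀ : 0 ≤ x) (hx : x < 1 / 2) : bernM h x = 2 * x + h := by
  have hfract : Int.fract x = x := Int.fract_eq_self.2 ⟨hx₀, by linarith⟩
  have hfloor : ⌊x⌋ = 0 := Int.floor_eq_zero_iff.2 ⟨hx₀, by linarith⟩
  rw [bernM, hfract, hfloor, if_pos hx]
  push_cast; ring

lemma bernM_of_half_le {x : ℝ} (hx₀ : 1 / 2 ≤ x) (hx : x < 1) :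
    bernM h x = 2 * x - 1 - h := by
  have hfract : Int.fract x = x := Int.fract_eq_self.2 ⟨by linarith, hx⟩
  have hfloor : ⌊x⌋ = 0 := Int.floor_eq_zero_iff.2 ⟨by linarith, hx⟩
  rw [bernM, hfract, hfloor, if_neg (not_lt.2 hx₀)]
  push_cast; ring

@[fun_prop]
lemma measurable_bernM : Measurable (bernM h) := by
  unfold bernM
  exact Measurable.ite (measurableSet_lt measurable_fract measurable_const) (by fun_prop)
    (by fun_prop)

noncomputable def disp (n : ℕ) (x : ℝ) : ℝ := (bernM h)^[n] x - x

lemma disp_zero (x : ℝ) : disp h 0 x = 0 := sub_self x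

lemma disp_one (x : ℝ) : disp h 1 x = bernM h x - x := rfl

lemma disp_succ (n : ℕ) (x : ℝ) : disp h (n + 1) x = disp h n (bernM h x) + disp h 1 x := by
  rw [disp, disp, disp, iterate_succ_apply, iterate_one]
  ring

lemma disp_periodic (n : ℕ) : Periodic (disp h n) 1 := by
  intro x
  suffices (bernM h)^[n] (x + 1) = (bernM h)^[n] x + 1 by simp only [disp, this]; ring
  exact Commute.iterate_left (bernM_add_one h) n x

@[fun_prop]
lemma measurable_disp (n : ℕ) : Measurable (disp h n) :=
  ((measurable_bernM h).iterate n).sub measurable_id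

lemma norm_disp_one_le (x : ℝ) : ‖disp h 1 x‖ ≤ |h| + 1 / 2 := by
  have hfract₀ := Int.fract_nonneg x
  have hfract₁ := Int.fract_lt_one x
  have hx := Int.floor_add_fract x
  rw [Real.norm_eq_abs, disp_one, bernM, abs_le]
  split_ifs <;> constructor <;> cases abs_cases h <;> linarith

lemma norm_disp_le (n : ℕ) (x : ℝ) : ‖disp h n x‖ ≤ n * (|h| + 1 / 2) := by
  induction n generalizing x with
  | zero => simp [disp_zero]
  | succ n ih =>
    rw [disp_succ]
    push_cast
    linarith [norm_add_le (disp h n (bernM h x)) (disp h 1 x), ih (bernM h x),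
      norm_disp_one_le h x]

lemma disp_one_of_lt_half {x : ℝ} (hx₀ : 0 ≤ x) (hx : x < 1 / 2) : disp h 1 x = x + h := by
  rw [disp_one, bernM_of_lt_half h hx₀ hx]; ring

lemma disp_one_of_half_le {x : ℝ} (hx₀ : 1 / 2 ≤ x) (hx : x < 1) : disp h 1 x = x - 1 - h := by
  rw [disp_one, bernM_of_half_le h hx₀ hx]; ring

/-- The two preimages of `u` under `M_h` modulo 1 are `fract (u - h) / 2 ∈ [0, 1/2)` and
`(1 + fract (u + h)) / 2 ∈ [1/2, 1)`, each branch having slope 2. -/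
noncomputable def transfer (w : ℝ → ℝ) (u : ℝ) : ℝ :=
  (w (Int.fract (u - h) / 2) + w ((1 + Int.fract (u + h)) / 2)) / 2

@[fun_prop]
lemma measurable_transfer {w : ℝ → ℝ} (hw : Measurable w) : Measurable (transfer h w) := by
  unfold transfer; fun_prop

lemma norm_transfer_le {w : ℝ → ℝ} {C : ℝ} (hwC : ∀ x, ‖w x‖ ≤ C) (u : ℝ) :
    ‖transfer h w u‖ ≤ C := by
  have h₁ := hwC (Int.fract (u - h) / 2)
  have h₂ := hwC ((1 + Int.fract (u + h)) / 2)
  simp only [transfer, Real.norm_eq_abs, abs_le] at *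
  constructor <;> linarith

theorem integral_mul_comp_bernM {w G : ℝ → ℝ} {Cw CG : ℝ} (hw : Measurable w)
    (hwC : ∀ x, ‖w x‖ ≤ Cw) (hG : Measurable G) (hGC : ∀ x, ‖G x‖ ≤ CG) (hGper : Periodic G 1) :
    ∫ x in (0 : ℝ)..1, w x * G (bernM h x) = ∫ u in (0 : ℝ)..1, transfer h w u * G u := by
  set F₁ : ℝ → ℝ := fun u => w (Int.fract (u - h) / 2) * G u
  set F₂ : ℝ → ℝ := fun u => w ((1 + Int.fract (u + h)) / 2) * G u
  have hC : ∀ a b, ‖w a * G b‖ ≤ Cw * CG := fun a b => norm_mul_le_of_le (hwC a) (hGC b)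
  have hF₁ : Periodic F₁ 1 := fun u => by
    simp only [F₁, add_sub_right_comm, Int.fract_add_one, hGper u]
  have hF₂ : Periodic F₂ 1 := fun u => by
    simp only [F₂, add_right_comm u 1, Int.fract_add_one, hGper u]
  have hleft : ∫ x in (0 : ℝ)..1 / 2, w x * G (bernM h x) = 2⁻¹ * ∫ u in (0 : ℝ)..1, F₁ u := by
    calc ∫ x in (0 : ℝ)..1 / 2, w x * G (bernM h x)
        = ∫ x in (0 : ℝ)..1 / 2, F₁ (2 * x + h) :=
          integral_congr_Ioo_of_le (by norm_num) fun x hx => by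
          have : Int.fract (2 * x) = 2 * x :=
            Int.fract_eq_self.2 ⟨by linarith [hx.1], by linarith [hx.2]⟩
          simp only [F₁, add_sub_cancel_right, this, bernM_of_lt_half h hx.1.le hx.2]
          ring_nf
      _ = 2⁻¹ * ∫ u in h..h + 1, F₁ u := by
          rw [integral_comp_mul_add _ two_ne_zero, smul_eq_mul]; norm_num [add_comm]
      _ = 2⁻¹ * ∫ u in (0 : ℝ)..1, F₁ u := by rw [hF₁.intervalIntegral_add_eq h 0, zero_add]
  have hright : ∫ x in (1 / 2 : ℝ)..1, w x * G (bernM h x) = 2⁻¹ * ∫ u in (0 : ℝ)..1, F₂ u := by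
    calc ∫ x in (1 / 2 : ℝ)..1, w x * G (bernM h x)
        = ∫ x in (1 / 2 : ℝ)..1, F₂ (2 * x + (-1 - h)) :=
          integral_congr_Ioo_of_le (by norm_num) fun x hx => by
          have : Int.fract (2 * x - 1) = 2 * x - 1 :=
            Int.fract_eq_self.2 ⟨by linarith [hx.1], by linarith [hx.2]⟩
          have harg : 2 * x + (-1 - h) + h = 2 * x - 1 := by ring
          simp only [F₂, harg, this, bernM_of_half_le h hx.1.le hx.2]
          ring_nf
      _ = 2⁻¹ * ∫ u in -h..-h + 1, F₂ u := by
          rw [integral_comp_mul_add _ two_ne_zero, smul_eq_mul]; ring_nf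
      _ = 2⁻¹ * ∫ u in (0 : ℝ)..1, F₂ u := by rw [hF₂.intervalIntegral_add_eq (-h) 0, zero_add]
  have hM : Measurable fun x => w x * G (bernM h x) := by fun_prop
  rw [← integral_add_adjacent_intervals (intervalIntegrable_of_norm_le hM (fun _ => hC _ _) 0 _)
      (intervalIntegrable_of_norm_le hM (fun _ => hC _ _) _ 1), hleft, hright, ← mul_add,
    ← integral_add (intervalIntegrable_of_norm_le (by fun_prop) (fun _ => hC _ _) 0 1)
      (intervalIntegrable_of_norm_le (by fun_prop) (fun _ => hC _ _) 0 1),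
    ← intervalIntegral.integral_const_mul]
  exact integral_congr fun u _ => by simp only [transfer]; ring

lemma integral_comp_bernM {G : ℝ → ℝ} {C : ℝ} (hG : Measurable G) (hGC : ∀ x, ‖G x‖ ≤ C)
    (hGper : Periodic G 1) : ∫ x in (0 : ℝ)..1, G (bernM h x) = ∫ x in (0 : ℝ)..1, G x := by
  simpa [transfer] using
    integral_mul_comp_bernM h (w := fun _ => 1) measurable_const (fun _ => norm_one.le) hG hGC hGper

lemma integral_disp_succ_sq (n : ℕ) :
    ∫ x in (0 : ℝ)..1, disp h (n + 1) x ^ 2 =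
      (∫ x in (0 : ℝ)..1, disp h n x ^ 2) +
        2 * (∫ x in (0 : ℝ)..1, transfer h (disp h 1) x * disp h n x) +
          ∫ x in (0 : ℝ)..1, disp h 1 x ^ 2 := by
  have hgC := norm_disp_le h n
  have hdC := norm_disp_one_le h
  have hinv : ∫ x in (0 : ℝ)..1, disp h n (bernM h x) ^ 2 = ∫ x in (0 : ℝ)..1, disp h n x ^ 2 :=
    integral_comp_bernM h (G := fun x => disp h n x ^ 2) (by fun_prop)
      (fun x => by rw [norm_pow]; exact pow_le_pow_left₀ (norm_nonneg _) (hgC x) 2)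
      fun x => by simp only [disp_periodic h n x]
  have hdual : ∫ x in (0 : ℝ)..1, disp h 1 x * disp h n (bernM h x) =
      ∫ x in (0 : ℝ)..1, transfer h (disp h 1) x * disp h n x :=
    integral_mul_comp_bernM h (by fun_prop) hdC (by fun_prop) hgC (disp_periodic h n)
  have hI₁ : IntervalIntegrable (fun x => disp h n (bernM h x) ^ 2) volume 0 1 :=
    intervalIntegrable_sq_of_norm_le (by fun_prop) (fun x => hgC _) 0 1
  have hI₂ : IntervalIntegrable (fun x => disp h 1 x * disp h n (bernM h x)) volume 0 1 :=
    intervalIntegrable_mul_of_norm_le (by fun_prop) hdC (by fun_prop) (fun x => hgC _) 0 1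
  rw [← hinv, ← hdual, ← intervalIntegral.integral_const_mul,
    ← intervalIntegral.integral_add hI₁ (hI₂.const_mul 2), ← intervalIntegral.integral_add
      (hI₁.add (hI₂.const_mul 2)) (intervalIntegrable_sq_of_norm_le (by fun_prop) hdC 0 1)]
  exact integral_congr fun x _ => by simp only [disp_succ h n x]; ring

lemma transfer_disp_one (u : ℝ) :
    transfer h (disp h 1) u = (Int.fract (u - h) + Int.fract (u + h) - 1) / 4 := by
  have h₁ := Int.fract_nonneg (u - h)
  have h₂ := Int.fract_lt_one (u - h)
  have h₃ := Int.fract_nonneg (u + h)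
  have h₄ := Int.fract_lt_one (u + h)
  rw [transfer, disp_one_of_lt_half h (by positivity) (by linarith),
    disp_one_of_half_le h (by linarith) (by linarith)]
  ring

variable {h}

lemma four_mul_transfer_disp_one_of_mem (hh : h ∈ Icc 0 1) {x : ℝ} (hx : x ∈ Ico 0 1) :
    4 * transfer h (disp h 1) x =
      2 * x - 1 + (if h ≤ x then 0 else 1) - (if x + h < 1 then 0 else 1) := by
  rw [transfer_disp_one, fract_sub_of_mem hx hh, fract_add_of_mem hx hh]
  split_ifs <;> ring

lemma transfer_transfer_disp_one (hh : h ∈ Icc (1 / 2) 1) {u : ℝ} (hu : u ∈ Ico 0 1) :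
    transfer h (transfer h (disp h 1)) u = transfer h (disp h 1) u / 2 := by
  obtain ⟨hh₀, hh₁⟩ := hh
  have hh' : h ∈ Icc 0 1 := ⟨by linarith, hh₁⟩
  have ha : Int.fract (u - h) / 2 ∈ Ico 0 1 :=
    ⟨by positivity, by linarith [Int.fract_lt_one (u - h)]⟩
  have hb : (1 + Int.fract (u + h)) / 2 ∈ Ico 0 1 :=
    ⟨by linarith [Int.fract_nonneg (u + h)], by linarith [Int.fract_lt_one (u + h)]⟩
  rw [transfer, transfer_disp_one, transfer_disp_one, transfer_disp_one,
    fract_sub_of_mem ha hh', fract_add_of_mem ha hh', fract_sub_of_mem hb hh',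
    fract_add_of_mem hb hh', fract_sub_of_mem hu hh', fract_add_of_mem hu hh']
  obtain ⟨hu₀, hu₁⟩ := hu
  -- With `a, b` the two preimages of `u`, we have `a < 1/2 ≤ h` and `1 - h ≤ 1/2 ≤ b`, and the
  -- identity comes down to `1 - h ≤ a ↔ b < h`.
  split_ifs <;> linarith

lemma integral_transfer_disp_one_mul_disp_succ (hh : h ∈ Icc (1 / 2) 1) (n : ℕ) :
    ∫ x in (0 : ℝ)..1, transfer h (disp h 1) x * disp h (n + 1) x =
      (∫ x in (0 : ℝ)..1, transfer h (disp h 1) x * disp h n x) / 2 +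
        ∫ x in (0 : ℝ)..1, transfer h (disp h 1) x * disp h 1 x := by
  have hgC := norm_disp_le h n
  have hPC := norm_transfer_le h (norm_disp_one_le h)
  have hdual : ∫ x in (0 : ℝ)..1, transfer h (disp h 1) x * disp h n (bernM h x) =
      ∫ x in (0 : ℝ)..1, transfer h (disp h 1) x * disp h n x / 2 := by
    rw [integral_mul_comp_bernM h (by fun_prop) hPC (by fun_prop) hgC (disp_periodic h n)]
    exact integral_congr_Ioo_of_le zero_le_one fun x hx => by
      simp only [transfer_transfer_disp_one hh (Ioo_subset_Ico_self hx)]; ring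
  rw [← intervalIntegral.integral_div, ← hdual, ← intervalIntegral.integral_add
      (intervalIntegrable_mul_of_norm_le (by fun_prop) hPC (by fun_prop) (fun x => hgC _) 0 1)
      (intervalIntegrable_mul_of_norm_le (by fun_prop) hPC (by fun_prop) (norm_disp_one_le h) 0 1)]
  exact integral_congr fun x _ => by simp only [disp_succ h n x]; ring

lemma disp_one_mul_add_four_transfer_of_mem (hh : h ∈ Icc (1 / 2) 1) {x : ℝ} (hx : x ∈ Ico 0 1) :
    disp h 1 x * (disp h 1 x + 4 * transfer h (disp h 1) x) =
      if x < 1 - h then (x + h) * (3 * x + h)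
      else if x < 1 / 2 then (x + h) * (3 * x + h - 1)
      else if x < h then (x - 1 - h) * (3 * x - 2 - h)
      else (x - 1 - h) * (3 * x - 3 - h) := by
  obtain ⟨hh₀, hh₁⟩ := hh
  rw [four_mul_transfer_disp_one_of_mem ⟨by linarith, hh₁⟩ hx]
  rcases lt_or_ge x (1 / 2) with hx' | hx'
  · rw [disp_one_of_lt_half h hx.1 hx']
    split_ifs <;> first | (exfalso; linarith) | ring
  · rw [disp_one_of_half_le h hx' hx.2]
    split_ifs <;> first | (exfalso; linarith) | ring

lemma integral_disp_one_mul_add_four_transfer (hh : h ∈ Icc (1 / 2) 1) :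
    ∫ x in (0 : ℝ)..1, disp h 1 x * (disp h 1 x + 4 * transfer h (disp h 1) x) = 1 := by
  set F : ℝ → ℝ := fun x => disp h 1 x * (disp h 1 x + 4 * transfer h (disp h 1) x)
  have hF_eq {x : ℝ} (hx : x ∈ Ico 0 1) := disp_one_mul_add_four_transfer_of_mem hh hx
  obtain ⟨hh₀, hh₁⟩ := hh
  have hdC := norm_disp_one_le h
  have hF : ∀ a b, IntervalIntegrable F volume a b :=
    intervalIntegrable_mul_of_norm_le (by fun_prop) hdC (by fun_prop) fun x =>
      (norm_add_le _ _).trans (add_le_add (hdC x)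
        (norm_mul_le_of_le (r₁ := 4) (by norm_num) (norm_transfer_le h hdC x)))
  have hF₁ : EqOn F (fun x => 3 * x ^ 2 + 4 * h * x + h ^ 2) (Ioo 0 (1 - h)) := fun x hx =>
    (hF_eq ⟨hx.1.le, by linarith [hx.2]⟩).trans (by rw [if_pos hx.2]; ring)
  have hF₂ : EqOn F (fun x => 3 * x ^ 2 + (4 * h - 1) * x + (h ^ 2 - h)) (Ioo (1 - h) (1 / 2)) :=
    fun x hx => (hF_eq ⟨by linarith [hx.1], by linarith [hx.2]⟩).trans
      (by rw [if_neg hx.1.not_gt, if_pos hx.2]; ring)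
  have hF₃ : EqOn F (fun x => 3 * x ^ 2 + (-5 - 4 * h) * x + (1 + h) * (2 + h)) (Ioo (1 / 2) h) :=
    fun x hx => (hF_eq ⟨by linarith [hx.1], by linarith [hx.2]⟩).trans
      (by rw [if_neg (by linarith [hx.1]), if_neg hx.1.not_gt, if_pos hx.2]; ring)
  have hF₄ : EqOn F (fun x => 3 * x ^ 2 + (-6 - 4 * h) * x + (1 + h) * (3 + h)) (Ioo h 1) :=
    fun x hx => (hF_eq ⟨by linarith [hx.1], hx.2⟩).trans
      (by rw [if_neg (by linarith [hx.1]), if_neg (by linarith [hx.1]), if_neg hx.1.not_gt]; ring)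
  rw [← integral_add_adjacent_intervals (hF 0 h) (hF h 1),
    ← integral_add_adjacent_intervals (hF 0 (1 / 2)) (hF (1 / 2) h),
    ← integral_add_adjacent_intervals (hF 0 (1 - h)) (hF (1 - h) (1 / 2)),
    integral_eq_of_eqOn_quadratic _ _ _ (by linarith) hF₁,
    integral_eq_of_eqOn_quadratic _ _ _ (by linarith) hF₂,
    integral_eq_of_eqOn_quadratic _ _ _ (by linarith) hF₃,
    integral_eq_of_eqOn_quadratic _ _ _ (by linarith) hF₄]
  ring

lemma integral_disp_one_sq_add_four_mul (hh : h ∈ Icc (1 / 2) 1) :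
    (∫ x in (0 : ℝ)..1, disp h 1 x ^ 2) +
      4 * ∫ x in (0 : ℝ)..1, transfer h (disp h 1) x * disp h 1 x = 1 := by
  have hdC := norm_disp_one_le h
  rw [← intervalIntegral.integral_const_mul, ← intervalIntegral.integral_add
    (intervalIntegrable_sq_of_norm_le (by fun_prop) hdC 0 1)
    ((intervalIntegrable_mul_of_norm_le (by fun_prop) (norm_transfer_le h hdC) (by fun_prop)
      hdC 0 1).const_mul 4)]
  exact (integral_congr fun x _ => by ring).trans (integral_disp_one_mul_add_four_transfer hh)

end LiftedBernoulli

open LiftedBernoulli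

theorem stmt12 (h : ℝ) (hh : h ∈ Set.Icc (1/2 : ℝ) 1) :
    Tendsto (fun n : ℕ => (1/(2*(n:ℝ))) * ∫ x in (0:ℝ)..1, ((bernM h)^[n] x - x)^2)
      atTop (nhds (1/2)) := by
  have hlim := tendsto_of_recurrence (J := fun n => ∫ x in (0 : ℝ)..1, disp h n x ^ 2)
    (A := fun n => ∫ x in (0 : ℝ)..1, transfer h (disp h 1) x * disp h n x)
    (by simp [disp_zero]) (by simp [disp_zero]) (integral_disp_succ_sq h)
    (integral_transfer_disp_one_mul_disp_succ hh)
  rwa [integral_disp_one_sq_add_four_mul hh] at hlim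
end

section
/- For every parameter h ∈ (0,1) and every x ∈ [0,1], the sequence of Takagi approximants T_h^n(x) of the lifted Bernoulli shift map converges as n → ∞, the series Σ_{k=0}^{∞} 2^{−k} ( t_h(M̃_h^k(x)) − (1/2) t_h(M̃_h^k(h)) ) converges absolutely, and lim_{n→∞} T_h^n(x) = Σ_{k=0}^{∞} 2^{−k} ( t_h(M̃_h^k(x)) − (1/2) t_h(M̃_h^k(h)) ). -/
open Filter

/-!
Since `⌊M^{k+1} y⌋ - ⌊M^k y⌋ = S (M̃^k y)` for the one-step jump `S u = ⌊M u⌋ - ⌊u⌋`, the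
integrand of `T_h^n` telescopes into `∑_{k ≤ n} S ∘ M̃^k`. A 1-periodic primitive of `S ∘ M̃^k` is
`φ_k = 2⁻ᵏ t_h ∘ M̃^k`: for `k = 0` because `S` is the step function with values `0, 1, -1, 0`
on the four intervals cut out by `(1 ∓ h)/2` and `1/2`, and inductively because on each half of
`[0, 1]` the map `M̃` is `y ↦ 2y + c` modulo 1, so that `φ_k ∘ M̃ / 2` is a primitive of
`S ∘ M̃^{k+1}` on each half; the two pieces glue since `φ_k` is even and 1-periodic, whence
`φ_k (1 - h) = φ_k h`. Thus `T_h^n x = ∑_{k ≤ n} (φ_k x - φ_k 0)`, and `φ_{k+1} 0 = φ_k h / 2`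
together with `0 ≤ φ_k ≤ 2⁻ᵏ` gives both the absolute convergence and the limit.
-/

open MeasureTheory Set Function intervalIntegral

theorem Function.Periodic.map_fract {β : Type*} {f : ℝ → β} (hf : Periodic f 1) (x : ℝ) :
    f (Int.fract x) = f x := by
  rw [← Int.self_sub_floor, ← mul_one (⌊x⌋ : ℝ)]
  exact hf.sub_int_mul_eq ⌊x⌋

theorem Function.Periodic.of_map_fract {β : Type*} {f : ℝ → β}
    (hf : ∀ x, f (Int.fract x) = f x) : Periodic f 1 := fun x => by
  rw [← hf, Int.fract_add_one, hf]

theorem Function.Periodic.intervalIntegral_eq_sub {f F : ℝ → ℝ} {T : ℝ} (hf : Periodic f T)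
    (hT : 0 < T) (hfi : ∀ a b, IntervalIntegrable f volume a b) (hF : Periodic F T)
    (hFf : ∀ x ∈ Icc 0 T, ∫ y in 0..x, f y = F x - F 0) (a b : ℝ) :
    ∫ y in a..b, f y = F b - F a := by
  suffices hF₀ : ∀ x, ∫ y in 0..x, f y = F x - F 0 by
    rw [← integral_interval_sub_left (hfi 0 b) (hfi 0 a), hF₀, hF₀]
    ring
  have hper : Periodic (fun x => (∫ y in 0..x, f y) - F x) T := fun x => by
    have hT₀ : F T = F 0 := by simpa using hF 0
    show (∫ y in 0..x + T, f y) - F (x + T) = (∫ y in 0..x, f y) - F x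
    rw [hf.intervalIntegral_add_eq_add 0 x hfi, zero_add, hFf T ⟨hT.le, le_rfl⟩, hF x, hT₀]
    ring
  intro x
  obtain ⟨y, hy, hxy⟩ := hper.exists_mem_Ico₀ hT x
  have := hFf y (Ico_subset_Icc_self hy)
  linarith

theorem intervalIntegrable_comp_mul_add {f : ℝ → ℝ} (hfi : ∀ a b, IntervalIntegrable f volume a b)
    {c : ℝ} (hc : c ≠ 0) (d a b : ℝ) : IntervalIntegrable (fun y => f (c * y + d)) volume a b := by
  simpa [hc] using ((hfi (c * a + d) (c * b + d)).comp_add_right d).comp_mul_left (c := c)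

noncomputable def bernJump (h u : ℝ) : ℝ := ⌊bernM h u⌋ - ⌊u⌋

section BernoulliShift

variable {h : ℝ}

theorem bernM_fract (h u : ℝ) : bernM h (Int.fract u) = bernM h u - ⌊u⌋ := by
  unfold bernM
  rw [Int.fract_fract, Int.floor_fract]
  split_ifs <;> push_cast <;> ring

theorem bernM_of_lt_half {y : ℝ} (hy₀ : 0 ≤ y) (hy : y < 1 / 2) : bernM h y = 2 * y + h := by
  have hfl : ⌊y⌋ = 0 := Int.floor_eq_zero_iff.2 ⟨hy₀, by linarith⟩
  rw [bernM, Int.fract_eq_self.2 ⟨hy₀, by linarith⟩, if_pos hy, hfl]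
  push_cast; ring

theorem bernM_of_half_le {y : ℝ} (hy : 1 / 2 ≤ y) (hy₁ : y < 1) :
    bernM h y = 2 * y - (1 + h) := by
  have hfl : ⌊y⌋ = 0 := Int.floor_eq_zero_iff.2 ⟨by linarith, hy₁⟩
  rw [bernM, Int.fract_eq_self.2 ⟨by linarith, hy₁⟩, if_neg (not_lt.2 hy), hfl]
  push_cast; ring

theorem bernMt_fract (h u : ℝ) : bernMt h (Int.fract u) = bernMt h u := by
  rw [bernMt, bernM_fract, Int.fract_sub_intCast, bernMt]

theorem periodic_bernMt (h : ℝ) : Periodic (bernMt h) 1 :=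
  .of_map_fract (bernMt_fract h)

theorem bernMt_mem_Ico (h u : ℝ) : bernMt h u ∈ Ico 0 1 :=
  ⟨Int.fract_nonneg _, Int.fract_lt_one _⟩

theorem bernJump_fract (h u : ℝ) : bernJump h (Int.fract u) = bernJump h u := by
  rw [bernJump, bernM_fract, Int.floor_fract, bernJump, Int.floor_sub_intCast]
  push_cast; ring

theorem periodic_bernJump (h : ℝ) : Periodic (bernJump h) 1 :=
  .of_map_fract (bernJump_fract h)

theorem fract_iterate_bernMt (h : ℝ) (k : ℕ) (y : ℝ) :
    Int.fract ((bernMt h)^[k] y) = Int.fract ((bernM h)^[k] y) := by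
  induction k with
  | zero => rfl
  | succ k ih =>
    rw [iterate_succ_apply', iterate_succ_apply', ← bernMt_fract, ih, bernMt_fract]
    exact Int.fract_fract _

theorem floor_iterate_bernM_sub_floor (h : ℝ) (n : ℕ) (y : ℝ) :
    (⌊(bernM h)^[n] y⌋ : ℝ) - ⌊y⌋ = ∑ k ∈ Finset.range n, bernJump h ((bernMt h)^[k] y) := by
  have hjump : ∀ k, bernJump h ((bernMt h)^[k] y) =
      ⌊(bernM h)^[k + 1] y⌋ - ⌊(bernM h)^[k] y⌋ := fun k => by
    rw [← bernJump_fract, fract_iterate_bernMt, bernJump_fract, bernJump, iterate_succ_apply']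
  simp only [hjump, Finset.sum_range_sub (fun k => (⌊(bernM h)^[k] y⌋ : ℝ)), iterate_zero, id]

theorem measurable_bernJump (h : ℝ) : Measurable (bernJump h) := by
  have hfloor : Measurable (fun u : ℝ => (⌊u⌋ : ℝ)) :=
    measurable_from_top.comp Int.measurable_floor
  have hM : Measurable (bernM h) :=
    Measurable.ite (measurableSet_lt measurable_fract measurable_const)
      ((hfloor.add (measurable_fract.const_mul 2)).add_const h)
      (((hfloor.add (measurable_fract.const_mul 2)).sub_const 1).sub_const h)
  exact (hfloor.comp hM).sub hfloor

theorem abs_bernJump_le (hh : h ∈ Icc (0 : ℝ) 1) (u : ℝ) : |bernJump h u| ≤ 1 := by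
  obtain ⟨hh₀, hh₁⟩ := hh
  rw [← bernJump_fract]
  have hv : Int.fract u ∈ Ico 0 1 := ⟨Int.fract_nonneg u, Int.fract_lt_one u⟩
  have hM : -1 ≤ bernM h (Int.fract u) ∧ bernM h (Int.fract u) < 2 := by
    rcases lt_or_ge (Int.fract u) (1 / 2) with hv₂ | hv₂
    · rw [bernM_of_lt_half hv.1 hv₂]; constructor <;> linarith [hv.1]
    · rw [bernM_of_half_le hv₂ hv.2]; constructor <;> linarith [hv.2]
  have hlo : -1 ≤ ⌊bernM h (Int.fract u)⌋ := Int.le_floor.2 (by exact_mod_cast hM.1)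
  have hhi : ⌊bernM h (Int.fract u)⌋ ≤ 1 := Int.lt_add_one_iff.1 (Int.floor_lt.2 (by
    exact_mod_cast hM.2))
  rw [bernJump, Int.floor_eq_zero_iff.2 hv, abs_le]
  constructor <;> push_cast <;> exact_mod_cast (by omega)

theorem intervalIntegrable_bernJump (hh : h ∈ Icc (0 : ℝ) 1) (a b : ℝ) :
    IntervalIntegrable (bernJump h) volume a b :=
  intervalIntegrable_const.mono_fun' (measurable_bernJump h).aestronglyMeasurable
    (ae_of_all _ fun u => abs_bernJump_le hh u)

theorem integral_bernJump_eq_mul {p q : ℝ} (c : ℤ) (hpq : p ≤ q)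
    (hc : ∀ y ∈ Ioo p q, ⌊bernM h y⌋ = c ∧ ⌊y⌋ = 0) : ∫ y in p..q, bernJump h y = c * (q - p) := by
  rw [integral_congr_Ioo_of_le hpq (g := fun _ => (c : ℝ)) fun y hy => by
    simp [bernJump, (hc y hy).1, (hc y hy).2], intervalIntegral.integral_const, smul_eq_mul,
    mul_comm]

theorem integral_bernJump (hh : h ∈ Icc (0 : ℝ) 1) {x : ℝ} (hx : x ∈ Icc (0 : ℝ) 1) :
    ∫ y in 0..x, bernJump h y = tFun h x := by
  obtain ⟨hh₀, hh₁⟩ := hh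
  obtain ⟨hx₀, hx₁⟩ := hx
  have hS := intervalIntegrable_bernJump ⟨hh₀, hh₁⟩
  have above : ∀ {p y : ℝ}, min x p < y → y < x → p < y := fun hp hy =>
    (min_lt_iff.1 hp).resolve_left (not_lt.2 hy.le)
  have floor_y : ∀ {y : ℝ}, 0 < y → y < 1 → ⌊y⌋ = 0 := fun hy₀ hy₁ =>
    Int.floor_eq_zero_iff.2 ⟨hy₀.le, hy₁⟩
  have I₁ := integral_bernJump_eq_mul (h := h) (q := min x ((1 - h) / 2)) 0 (le_min hx₀ (by linarith)) fun y ⟨hy₀, hy⟩ => by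
    obtain ⟨-, hy⟩ := lt_min_iff.1 hy
    rw [bernM_of_lt_half hy₀.le (by linarith)]
    exact ⟨Int.floor_eq_zero_iff.2 ⟨by linarith, by linarith⟩, floor_y hy₀ (by linarith)⟩
  have I₂ := integral_bernJump_eq_mul (h := h) 1 (min_le_min_left x (by linarith : (1 - h) / 2 ≤ 1 / 2)) fun y ⟨hy₀, hy⟩ => by
    obtain ⟨hyx, hy⟩ := lt_min_iff.1 hy
    have hy₀ := above hy₀ hyx
    rw [bernM_of_lt_half (by linarith) hy]
    exact ⟨Int.floor_eq_iff.2 (by push_cast; constructor <;> linarith),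
      floor_y (by linarith) (by linarith)⟩
  have I₃ := integral_bernJump_eq_mul (h := h) (-1) (min_le_min_left x (by linarith : 1 / 2 ≤ (1 + h) / 2))
    fun y ⟨hy₀, hy⟩ => by
    obtain ⟨hyx, hy⟩ := lt_min_iff.1 hy
    have hy₀ := above hy₀ hyx
    rw [bernM_of_half_le hy₀.le (by linarith)]
    exact ⟨Int.floor_eq_iff.2 (by push_cast; constructor <;> linarith),
      floor_y (by linarith) (by linarith)⟩
  have I₄ := integral_bernJump_eq_mul (h := h) (p := min x ((1 + h) / 2)) 0 (min_le_left _ _) fun y ⟨hy₀, hyx⟩ => by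
    have hy₀ := above hy₀ hyx
    rw [bernM_of_half_le (by linarith) (by linarith)]
    exact ⟨Int.floor_eq_zero_iff.2 ⟨by linarith, by linarith⟩, floor_y (by linarith) (by linarith)⟩
  rw [← integral_add_adjacent_intervals (hS _ _) (hS (min x ((1 + h) / 2)) x),
    ← integral_add_adjacent_intervals (hS _ _) (hS (min x (1 / 2)) _),
    ← integral_add_adjacent_intervals (hS _ _) (hS (min x ((1 - h) / 2)) _), I₁, I₂, I₃, I₄]
  unfold tFun
  simp only [min_def]
  split_ifs <;> push_cast <;> linarith

end BernoulliShift

section ChangeOfVariables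

variable {h : ℝ} {f F : ℝ → ℝ}

theorem comp_bernMt_eqOn_Ico_zero_half (hf : Periodic f 1) :
    EqOn (fun y => f (bernMt h y)) (fun y => f (2 * y + h)) (Ico 0 (1 / 2)) := fun y hy => by
  simp only [bernMt, hf.map_fract, bernM_of_lt_half hy.1 hy.2]

theorem comp_bernMt_eqOn_Ico_half_one (hf : Periodic f 1) :
    EqOn (fun y => f (bernMt h y)) (fun y => f (2 * y + -(1 + h))) (Ico (1 / 2) 1) :=
  fun y hy => by simp only [bernMt, hf.map_fract, bernM_of_half_le hy.1 hy.2, sub_eq_add_neg]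

theorem intervalIntegrable_comp_bernMt (hf : Periodic f 1)
    (hfi : ∀ a b, IntervalIntegrable f volume a b) (a b : ℝ) :
    IntervalIntegrable (fun y => f (bernMt h y)) volume a b := by
  refine ((periodic_bernMt h).comp f).intervalIntegrable₀ one_ne_zero ?_ a b
  have hlo := (intervalIntegrable_comp_mul_add hfi two_ne_zero h 0 (1 / 2)).congr_uIoo
    (f := fun y => f (2 * y + h)) (g := fun y => f (bernMt h y)) fun y hy => by
    rw [uIoo_of_le (by norm_num)] at hy
    exact (comp_bernMt_eqOn_Ico_zero_half hf ⟨hy.1.le, hy.2⟩).symm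
  have hhi := (intervalIntegrable_comp_mul_add hfi two_ne_zero (-(1 + h)) (1 / 2) 1).congr_uIoo
    (f := fun y => f (2 * y + -(1 + h))) (g := fun y => f (bernMt h y)) fun y hy => by
    rw [uIoo_of_le (by norm_num)] at hy
    exact (comp_bernMt_eqOn_Ico_half_one hf ⟨hy.1.le, hy.2⟩).symm
  exact hlo.trans hhi

theorem integral_comp_bernMt (hf : Periodic f 1) (hfi : ∀ a b, IntervalIntegrable f volume a b)
    (hF : Periodic F 1) (hFf : ∀ a b, ∫ y in a..b, f y = F b - F a) (hFh : F (1 - h) = F h)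
    (a b : ℝ) :
    ∫ y in a..b, f (bernMt h y) = F (bernMt h b) / 2 - F (bernMt h a) / 2 := by
  refine ((periodic_bernMt h).comp f).intervalIntegral_eq_sub one_pos
    (intervalIntegrable_comp_bernMt hf hfi) ((periodic_bernMt h).comp (F · / 2))
    (fun x ⟨hx₀, hx₁⟩ => ?_) a b
  have hFM : ∀ y, F (bernMt h y) = F (bernM h y) := fun y => hF.map_fract _
  have hF₁ : F (1 + h) = F h := by simpa [add_comm] using hF h
  have hF₂ : F (-h) = F h := by rw [← hFh, sub_eq_neg_add, hF]
  set m := min x (1 / 2)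
  have hlo : ∫ y in 0..m, f (bernMt h y) = (F (2 * m + h) - F h) / 2 := by
    have hsub : Ioo 0 m ⊆ Ico 0 (1 / 2) := fun y hy => ⟨hy.1.le, hy.2.trans_le (min_le_right _ _)⟩
    rw [integral_congr_Ioo_of_le (le_min hx₀ (by norm_num))
      ((comp_bernMt_eqOn_Ico_zero_half hf).mono hsub),
      integral_comp_mul_add _ two_ne_zero, smul_eq_mul, hFf, mul_zero, zero_add]
    ring
  have hhi : ∫ y in m..x, f (bernMt h y) = (F (2 * x - (1 + h)) - F (2 * m - (1 + h))) / 2 := by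
    have hsub : Ioo m x ⊆ Ico (1 / 2) 1 := fun y hy =>
      ⟨((min_lt_iff.1 hy.1).resolve_left (not_lt.2 hy.2.le)).le, hy.2.trans_le hx₁⟩
    rw [integral_congr_Ioo_of_le (min_le_left _ _)
      ((comp_bernMt_eqOn_Ico_half_one hf).mono hsub),
      integral_comp_mul_add _ two_ne_zero, smul_eq_mul, hFf, ← sub_eq_add_neg, ← sub_eq_add_neg]
    ring
  simp only [comp_apply, hFM, bernM_of_lt_half le_rfl one_half_pos, mul_zero, zero_add]
  rw [← integral_add_adjacent_intervals (intervalIntegrable_comp_bernMt hf hfi 0 m)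
    (intervalIntegrable_comp_bernMt hf hfi m x), hlo, hhi]
  rcases lt_or_ge x (1 / 2) with hx | hx
  · rw [show m = x from min_eq_left hx.le, bernM_of_lt_half hx₀ hx]
    ring
  · have hM : F (bernM h x) = F (2 * x - (1 + h)) := by
      rcases hx₁.lt_or_eq with hx₁ | rfl
      · rw [bernM_of_half_le hx hx₁]
      · rw [show bernM h 1 = 1 + h by norm_num [bernM], hF₁, ← hFh]
        ring_nf
    rw [show m = 1 / 2 from min_eq_right hx, hM]
    norm_num [hF₁, hF₂]
    ring

end ChangeOfVariables

section TakagiTerm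

variable {h : ℝ}

theorem comp_bernMt_neg {g : ℝ → ℝ} (hg : Function.Even g) (hgp : Periodic g 1) (x : ℝ) :
    g (bernMt h (-x)) = g (bernMt h x) := by
  have hrefl : ∀ z, g (1 - z) = g z := fun z => by rw [sub_eq_neg_add, hgp, hg]
  have hgM : ∀ y, g (bernMt h y) = g (bernM h y) := fun y => hgp.map_fract _
  rw [← bernMt_fract h (-x), ← bernMt_fract h x]
  rcases eq_or_ne (Int.fract x) 0 with hv | hv
  · rw [Int.fract_neg_eq_zero.2 hv, hv]
  have hv₀ : 0 < Int.fract x := (Int.fract_nonneg x).lt_of_ne' hv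
  have hv₁ := Int.fract_lt_one x
  rw [Int.fract_neg hv, hgM, hgM]
  rcases lt_trichotomy (Int.fract x) (1 / 2) with hlt | heq | hgt
  · rw [bernM_of_half_le (by linarith) (by linarith), bernM_of_lt_half hv₀.le hlt, ← hrefl]
    ring_nf
  · rw [heq]; norm_num
  · rw [bernM_of_lt_half (by linarith) (by linarith), bernM_of_half_le hgt.le hv₁, ← hrefl]
    ring_nf

theorem tFun_one_sub (h u : ℝ) : tFun h (1 - u) = tFun h u := by
  unfold tFun; split_ifs <;> linarith

theorem tFun_zero (hh : h ≤ 1) : tFun h 0 = 0 := by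
  unfold tFun; split_ifs <;> linarith

theorem tFun_fract {x : ℝ} (hx : x ∈ Icc (0 : ℝ) 1) :
    tFun h (Int.fract x) = tFun h x := by
  rcases hx.2.lt_or_eq with hx₁ | rfl
  · rw [Int.fract_eq_self.2 ⟨hx.1, hx₁⟩]
  · rw [Int.fract_one, ← tFun_one_sub h 1, sub_self]

theorem tFun_mem_Icc (hh : h ∈ Icc (0 : ℝ) 1) (u : ℝ) : tFun h u ∈ Icc (0 : ℝ) 1 := by
  obtain ⟨hh₀, hh₁⟩ := hh
  unfold tFun; split_ifs <;> constructor <;> linarith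

-- On `[0, 1]` this is `2⁻ᵏ t_h (M̃_h^k u)` (`takagiTerm_eq`); the `Int.fract` makes it 1-periodic.
noncomputable def takagiTerm (h : ℝ) : ℕ → ℝ → ℝ
  | 0 => fun u => tFun h (Int.fract u)
  | k + 1 => fun u => takagiTerm h k (bernMt h u) / 2

theorem periodic_takagiTerm (h : ℝ) : ∀ k, Periodic (takagiTerm h k) 1
  | 0 => fun u => by simp only [takagiTerm, Int.fract_add_one]
  | k + 1 => fun u => by simp only [takagiTerm, periodic_bernMt h u]

theorem even_takagiTerm (h : ℝ) : ∀ k, Function.Even (takagiTerm h k)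
  | 0 => fun u => by
    simp only [takagiTerm]
    rcases eq_or_ne (Int.fract u) 0 with hu | hu
    · rw [Int.fract_neg_eq_zero.2 hu, hu]
    · rw [Int.fract_neg hu, tFun_one_sub]
  | k + 1 => fun u => by
    simp only [takagiTerm, comp_bernMt_neg (even_takagiTerm h k) (periodic_takagiTerm h k)]

theorem takagiTerm_one_sub (h : ℝ) (k : ℕ) (u : ℝ) : takagiTerm h k (1 - u) = takagiTerm h k u := by
  rw [sub_eq_neg_add, periodic_takagiTerm h k, even_takagiTerm h k]

theorem takagiTerm_succ_zero (h : ℝ) (k : ℕ) : takagiTerm h (k + 1) 0 = takagiTerm h k h / 2 := by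
  simp only [takagiTerm, bernMt, (periodic_takagiTerm h k).map_fract,
    bernM_of_lt_half le_rfl one_half_pos, mul_zero, zero_add]

theorem takagiTerm_eq (k : ℕ) {u : ℝ} (hu : u ∈ Icc (0 : ℝ) 1) :
    takagiTerm h k u = (1 / 2) ^ k * tFun h ((bernMt h)^[k] u) := by
  induction k generalizing u with
  | zero => simp [takagiTerm, tFun_fract hu]
  | succ k ih =>
    show takagiTerm h k (bernMt h u) / 2 = _
    rw [ih (Ico_subset_Icc_self (bernMt_mem_Ico h u)), iterate_succ_apply]
    ring

theorem takagiTerm_mem_Icc (hh : h ∈ Icc (0 : ℝ) 1) (k : ℕ) (u : ℝ) :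
    takagiTerm h k u ∈ Icc 0 ((1 / 2) ^ k) := by
  induction k generalizing u with
  | zero => simpa [takagiTerm] using tFun_mem_Icc hh _
  | succ k ih =>
    obtain ⟨h₀, h₁⟩ := ih (bernMt h u)
    rw [takagiTerm, pow_succ]
    constructor <;> linarith

theorem periodic_bernJump_comp_iterate (h : ℝ) :
    ∀ k, Periodic (fun y => bernJump h ((bernMt h)^[k] y)) 1
  | 0 => periodic_bernJump h
  | k + 1 => fun y => by simp only [iterate_succ_apply, periodic_bernMt h y]

theorem intervalIntegrable_bernJump_comp_iterate (hh : h ∈ Icc (0 : ℝ) 1) (k : ℕ) (a b : ℝ) :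
    IntervalIntegrable (fun y => bernJump h ((bernMt h)^[k] y)) volume a b := by
  induction k generalizing a b with
  | zero => exact intervalIntegrable_bernJump hh a b
  | succ k ih =>
    simp only [iterate_succ_apply]
    exact intervalIntegrable_comp_bernMt (periodic_bernJump_comp_iterate h k) ih a b

theorem integral_bernJump_comp_iterate (hh : h ∈ Icc (0 : ℝ) 1) (k : ℕ) (a b : ℝ) :
    ∫ y in a..b, bernJump h ((bernMt h)^[k] y) = takagiTerm h k b - takagiTerm h k a := by
  induction k generalizing a b with
  | zero =>
    refine (periodic_bernJump h).intervalIntegral_eq_sub one_pos (intervalIntegrable_bernJump hh)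
      (periodic_takagiTerm h 0) (fun x hx => ?_) a b
    simp [integral_bernJump hh hx, takagiTerm, tFun_fract hx, tFun_zero hh.2]
  | succ k ih =>
    simp only [iterate_succ_apply]
    exact integral_comp_bernMt (periodic_bernJump_comp_iterate h k)
      (intervalIntegrable_bernJump_comp_iterate hh k) (periodic_takagiTerm h k) ih
      (takagiTerm_one_sub h k h) a b

theorem bernTak_eq (hh : h ∈ Icc (0 : ℝ) 1) (n : ℕ) (x : ℝ) :
    bernTak h n x = ∑ k ∈ Finset.range (n + 1), (takagiTerm h k x - takagiTerm h k h / 2) +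
      takagiTerm h n h / 2 := by
  have hsum : ∫ y in 0..x, ∑ k ∈ Finset.range (n + 1), bernJump h ((bernMt h)^[k] y) =
      ∑ k ∈ Finset.range (n + 1), (takagiTerm h k x - takagiTerm h k 0) := by
    rw [integral_finsetSum fun k _ => intervalIntegrable_bernJump_comp_iterate hh k 0 x]
    simp only [integral_bernJump_comp_iterate hh]
  simp only [bernTak, floor_iterate_bernM_sub_floor, hsum, Finset.sum_sub_distrib,
    Finset.sum_range_succ' (fun k => takagiTerm h k 0), takagiTerm_succ_zero]
  simp only [takagiTerm, Int.fract_zero, tFun_zero hh.2, Finset.sum_range_succ, ← Finset.sum_div]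
  ring

end TakagiTerm

theorem stmt18 (h : ℝ) (hh : h ∈ Set.Ioo (0:ℝ) 1) (x : ℝ) (hx : x ∈ Set.Icc (0:ℝ) 1) :
    Summable (fun k : ℕ =>
      |(1/2:ℝ)^k * (tFun h ((bernMt h)^[k] x) - (1/2) * tFun h ((bernMt h)^[k] h))|) ∧
    Tendsto (fun n : ℕ => bernTak h n x) atTop
      (nhds (∑' k : ℕ,
        (1/2:ℝ)^k * (tFun h ((bernMt h)^[k] x) - (1/2) * tFun h ((bernMt h)^[k] h)))) := by
  have hh' : h ∈ Icc (0 : ℝ) 1 := Ioo_subset_Icc_self hh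
  have hterm : ∀ k : ℕ, (1 / 2 : ℝ) ^ k * (tFun h ((bernMt h)^[k] x) -
      1 / 2 * tFun h ((bernMt h)^[k] h)) = takagiTerm h k x - takagiTerm h k h / 2 := fun k => by
    rw [takagiTerm_eq k hx, takagiTerm_eq k hh']
    ring
  have hbound : ∀ k, |takagiTerm h k x - takagiTerm h k h / 2| ≤ (1 / 2) ^ k := fun k => by
    obtain ⟨hx₀, hx₁⟩ := takagiTerm_mem_Icc hh' k x
    obtain ⟨hh₀, hh₁⟩ := takagiTerm_mem_Icc hh' k h
    rw [abs_le]
    constructor <;> linarith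
  have htail : Tendsto (fun n => takagiTerm h n h / 2) atTop (nhds 0) :=
    squeeze_zero (fun n => div_nonneg (takagiTerm_mem_Icc hh' n h).1 zero_le_two)
      (fun n => by linarith [(takagiTerm_mem_Icc hh' n h).2, (takagiTerm_mem_Icc hh' n h).1])
      (tendsto_pow_atTop_nhds_zero_of_lt_one (by norm_num) one_half_lt_one)
  simp only [hterm]
  have habs := summable_geometric_two.of_nonneg_of_le (fun _ => abs_nonneg _) hbound
  refine ⟨habs, ?_⟩
  simpa [bernTak_eq hh'] using
    (habs.of_abs.hasSum.tendsto_sum_nat.comp (tendsto_add_atTop_nat 1)).add htail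
end
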